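/- arXiv:2210.00245 — 7 statements merged into one kernel-verified Lean document; each statement's English description precedes it below -/
import Mathlib

section
/- If f : S_n → {0,1} has degree at most 1, then C(f) ≤ 1, i.e., every permutation α ∈ S_n has a certificate for α (with respect to f) of size at most 1. -/
/-- `α` satisfies the certificate `C ⊆ [n] × [n]`. -/
def PermSatisfies (n : ℕ) (α : Equiv.Perm (Fin n)) (C : Finset (Fin n × Fin n)) : Prop :=
  ∀ p ∈ C, α p.1 = p.2

/-- `C` is a certificate for `α` with respect to `f`. -/
def IsPermCertFor (n : ℕ) (f : Equiv.Perm (Fin n) → ℝ) (α : Equiv.Perm (Fin n))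
    (C : Finset (Fin n × Fin n)) : Prop :=
  PermSatisfies n α C ∧ ∀ β : Equiv.Perm (Fin n), PermSatisfies n β C → f β = f α

/-- The certificate complexity `C(f, α)`: the minimum size of a certificate for `α`. -/
noncomputable def permCertComplexityAt (n : ℕ) (f : Equiv.Perm (Fin n) → ℝ)
    (α : Equiv.Perm (Fin n)) : ℕ :=
  sInf {k | ∃ C : Finset (Fin n × Fin n), C.card = k ∧ IsPermCertFor n f α C}

/-- The certificate complexity `C(f)`: the maximum of `C(f, α)` over all `α`. -/
noncomputable def permCertComplexity (n : ℕ) (f : Equiv.Perm (Fin n) → ℝ) : ℕ :=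
  Finset.univ.sup fun α : Equiv.Perm (Fin n) => permCertComplexityAt n f α

/-- The monomial `α ↦ ∏_{(i,j) ∈ S} x_{ij}(α)`. -/
def permMonomial (n : ℕ) (S : Finset (Fin n × Fin n)) : Equiv.Perm (Fin n) → ℝ :=
  fun α => ∏ p ∈ S, if α p.1 = p.2 then (1 : ℝ) else 0

/-- `f : S_n → ℝ` has degree at most `d`: it is a real linear combination of monomials
`∏_{(i,j) ∈ S} x_{ij}` with `|S| ≤ d`. -/
def PermDegLE (n d : ℕ) (f : Equiv.Perm (Fin n) → ℝ) : Prop :=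
  f ∈ Submodule.span ℝ {g : Equiv.Perm (Fin n) → ℝ |
    ∃ S : Finset (Fin n × Fin n), S.card ≤ d ∧ g = permMonomial n S}

/-- The degree of `f : S_n → ℝ`. -/
noncomputable def permDeg (n : ℕ) (f : Equiv.Perm (Fin n) → ℝ) : ℕ :=
  sInf {d | PermDegLE n d f}

/-- Two permutations are 2-intersecting: they agree on at least two points. -/
def PermTwoIntersecting (n : ℕ) (α β : Equiv.Perm (Fin n)) : Prop :=
  ∃ i j : Fin n, i ≠ j ∧ α i = β i ∧ α j = β j

/-- A family of permutations is 2-intersecting. -/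
def PermTwoIntersectingFamily (n : ℕ) (F : Finset (Equiv.Perm (Fin n))) : Prop :=
  ∀ α ∈ F, ∀ β ∈ F, PermTwoIntersecting n α β

/-- The coset `U_{i→j} = {α : α(i) = j}`, for `p = (i, j)`. -/
def PermCoset (n : ℕ) (p : Fin n × Fin n) : Set (Equiv.Perm (Fin n)) :=
  {α : Equiv.Perm (Fin n) | α p.1 = p.2}

/-- Two cosets are compatible if their intersection is nonempty. -/
def PermCosetCompatible (n : ℕ) (p q : Fin n × Fin n) : Prop :=
  (PermCoset n p ∩ PermCoset n q).Nonempty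

/-- `F` is `m`-covered: it is contained in a union of `m` pairwise compatible cosets. -/
def PermMCovered (n m : ℕ) (F : Finset (Equiv.Perm (Fin n))) : Prop :=
  ∃ P : Finset (Fin n × Fin n), P.card = m ∧
    (∀ p ∈ P, ∀ q ∈ P, PermCosetCompatible n p q) ∧
    ↑F ⊆ ⋃ p ∈ P, PermCoset n p

/-- A `t`-coset of `S_n`: the set of permutations sending `i₁,…,i_t` to `j₁,…,j_t`
respectively, for distinct `i`'s and distinct `j`'s. -/
def IsPermTCoset (n t : ℕ) (S : Set (Equiv.Perm (Fin n))) : Prop :=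
  ∃ C : Finset (Fin n × Fin n), C.card = t ∧
    (∀ p ∈ C, ∀ q ∈ C, (p.1 = q.1 → p = q) ∧ (p.2 = q.2 → p = q)) ∧
    S = {α : Equiv.Perm (Fin n) | ∀ p ∈ C, α p.1 = p.2}

variable {n : ℕ}


lemma rep_extract {f : Equiv.Perm (Fin n) → ℝ} (hdeg : PermDegLE n 1 f) :
    ∃ (c : ℝ) (M : Fin n → Fin n → ℝ), ∀ γ, f γ = c + ∑ w, M w (γ w) := by
  refine Submodule.span_induction ?_ ?_ ?_ ?_ hdeg
  · rintro g ⟨S, hS, rfl⟩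
    rcases S.eq_empty_or_nonempty with rfl | ⟨a, ha⟩
    · exact ⟨1, 0, fun γ => by simp [permMonomial]⟩
    · have hsing : S = {a} := by
        apply Finset.eq_singleton_iff_unique_mem.2
        refine ⟨ha, fun b hb => ?_⟩
        have := Finset.card_le_one.1 hS
        exact this b hb a ha
      subst hsing
      refine ⟨0, fun w v => if w = a.1 ∧ v = a.2 then 1 else 0, fun γ => ?_⟩
      rw [permMonomial, Finset.prod_singleton]
      rw [Fintype.sum_eq_single a.1 (fun w hw => by simp [hw])]
      simp
  · exact ⟨0, 0, fun γ => by simp⟩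
  · rintro g h _ _ ⟨c, M, hg⟩ ⟨c', M', hh⟩
    refine ⟨c + c', fun w v => M w v + M' w v, fun γ => ?_⟩
    simp [Pi.add_apply, hg, hh, Finset.sum_add_distrib]
    ring
  · rintro r g _ ⟨c, M, hg⟩
    refine ⟨r * c, fun w v => r * M w v, fun γ => ?_⟩
    simp [Pi.smul_apply, hg, smul_eq_mul, Finset.mul_sum, mul_add]


lemma exists_perm_list (l : List (Fin n × Fin n))
    (h1 : (l.map Prod.fst).Nodup) (h2 : (l.map Prod.snd).Nodup) :
    ∃ γ : Equiv.Perm (Fin n), ∀ p ∈ l, γ p.1 = p.2 := by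
  induction l with
  | nil => exact ⟨1, by simp⟩
  | cons hd tl ih =>
    simp only [List.map_cons, List.nodup_cons] at h1 h2
    obtain ⟨γ, hγ⟩ := ih h1.2 h2.2
    refine ⟨γ * Equiv.swap (γ.symm hd.2) hd.1, ?_⟩
    intro p hp
    rcases List.mem_cons.1 hp with rfl | hp
    · simp [Equiv.Perm.mul_apply]
    · have hne1 : p.1 ≠ hd.1 := by
        intro h; exact h1.1 (by exact List.mem_map.2 ⟨p, hp, h⟩)
      have hne2 : p.1 ≠ γ.symm hd.2 := by
        intro h
        have : γ p.1 = hd.2 := by rw [h]; simp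
        rw [hγ p hp] at this
        exact h2.1 (List.mem_map.2 ⟨p, hp, this⟩)
      rw [Equiv.Perm.mul_apply, Equiv.swap_apply_of_ne_of_ne hne2 hne1, hγ p hp]

lemma swapDiff (f : Equiv.Perm (Fin n) → ℝ) (c1 : ℝ) (N : Fin n → Fin n → ℝ)
    (hf : ∀ γ, f γ = c1 + ∑ w, N w (γ w)) (p q : Fin n) (hpq : p ≠ q)
    (γ : Equiv.Perm (Fin n)) :
    f (γ * Equiv.swap p q) = f γ - (N p (γ p) + N q (γ q)) + (N p (γ q) + N q (γ p)) := by
  rw [hf, hf]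
  have key : ∀ w, N w ((γ * Equiv.swap p q) w)
      = N w (γ w) + ((if w = p then N p (γ q) - N p (γ p) else 0)
        + (if w = q then N q (γ p) - N q (γ q) else 0)) := by
    intro w
    by_cases h1 : w = p
    · subst h1
      simp [Equiv.Perm.mul_apply, Equiv.swap_apply_left, hpq]
    · by_cases h2 : w = q
      · subst h2
        simp [Equiv.Perm.mul_apply, Equiv.swap_apply_right, h1]
      · simp [Equiv.Perm.mul_apply, Equiv.swap_apply_of_ne_of_ne h1 h2, h1, h2]
  simp only [key]
  rw [Finset.sum_add_distrib, Finset.sum_add_distrib,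
    Finset.sum_ite_eq' Finset.univ p, Finset.sum_ite_eq' Finset.univ q]
  simp
  ring

section core

variable (f : Equiv.Perm (Fin n) → ℝ) (c1 : ℝ) (N : Fin n → Fin n → ℝ) (z : Fin n)

/-- entries are in {-1,0,1} -/
lemma entry_cases (hf : ∀ γ, f γ = c1 + ∑ w, N w (γ w)) (hB : ∀ γ, f γ = 0 ∨ f γ = 1)
    (hrz : ∀ j, N z j = 0) (hcz : ∀ i, N i z = 0) (i a : Fin n) :
    N i a = -1 ∨ N i a = 0 ∨ N i a = 1 := by
  by_cases hiz : i = z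
  · subst hiz; right; left; exact hrz a
  by_cases haz : a = z
  · subst haz; right; left; exact hcz i
  obtain ⟨γ, hγ⟩ := exists_perm_list [(i,a),(z,z)] (by simp [hiz]) (by simp [haz])
  have hi : γ i = a := hγ (i,a) (by simp)
  have hz : γ z = z := hγ (z,z) (by simp)
  have h2 := swapDiff f c1 N hf i z hiz γ
  rw [hi, hz] at h2
  simp only [hrz, hcz] at h2
  rcases hB γ with h3 | h3 <;> rcases hB (γ * Equiv.swap i z) with h4 | h4 <;>
    rw [h3, h4] at h2
  · right; left; linarith
  · left; linarith
  · right; right; linarith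
  · right; left; linarith

/-- no +1 entry together with a -1 entry -/
lemma noMix (hf : ∀ γ, f γ = c1 + ∑ w, N w (γ w)) (hB : ∀ γ, f γ = 0 ∨ f γ = 1)
    (hrz : ∀ j, N z j = 0) (hcz : ∀ i, N i z = 0) {i a k b : Fin n}
    (hP : N i a = 1) (hQ : N k b = -1) : False := by
  have hiz : i ≠ z := fun h => by rw [h, hrz] at hP; norm_num at hP
  have haz : a ≠ z := fun h => by rw [h, hcz] at hP; norm_num at hP
  have hkz : k ≠ z := fun h => by rw [h, hrz] at hQ; norm_num at hQ
  have hbz : b ≠ z := fun h => by rw [h, hcz] at hQ; norm_num at hQ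
  by_cases hik : i = k
  · subst hik
    have hab : a ≠ b := fun h => by rw [h, hQ] at hP; norm_num at hP
    obtain ⟨γ, hγ⟩ := exists_perm_list [(i,a),(z,b)] (by simp [hiz]) (by simp [hab, hbz])
    have h1 : γ i = a := hγ (i,a) (by simp)
    have h2 : γ z = b := hγ (z,b) (by simp)
    have h3 := swapDiff f c1 N hf i z hiz γ
    rw [h1, h2] at h3
    simp only [hrz, hcz, hP, hQ] at h3
    rcases hB γ with h4 | h4 <;> rcases hB (γ * Equiv.swap i z) with h5 | h5 <;>
      rw [h4, h5] at h3 <;> linarith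
  · by_cases hab : a = b
    · subst hab
      obtain ⟨γ, hγ⟩ := exists_perm_list [(i,a),(k,z)] (by simp [hik]) (by simp [haz])
      have h1 : γ i = a := hγ (i,a) (by simp)
      have h2 : γ k = z := hγ (k,z) (by simp)
      have h3 := swapDiff f c1 N hf i k hik γ
      rw [h1, h2] at h3
      simp only [hrz, hcz, hP, hQ] at h3
      rcases hB γ with h4 | h4 <;> rcases hB (γ * Equiv.swap i k) with h5 | h5 <;>
        rw [h4, h5] at h3 <;> linarith
    · -- 3-cycle instance
      obtain ⟨γ, hγ⟩ := exists_perm_list [(i,a),(k,z),(z,b)]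
        (by simp [hik, hiz, hkz]) (by simp [hab, haz, hbz, Ne.symm hbz])
      have h1 : γ i = a := hγ (i,a) (by simp)
      have h2 : γ k = z := hγ (k,z) (by simp)
      have h3 : γ z = b := hγ (z,b) (by simp)
      have e1 := swapDiff f c1 N hf i k hik γ
      set γ₂ := γ * Equiv.swap i k with hγ₂
      have g1 : γ₂ k = a := by rw [hγ₂, Equiv.Perm.mul_apply, Equiv.swap_apply_right, h1]
      have g2 : γ₂ z = b := by
        rw [hγ₂, Equiv.Perm.mul_apply, Equiv.swap_apply_of_ne_of_ne hiz.symm hkz.symm, h3]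
      have e2 := swapDiff f c1 N hf k z hkz γ₂
      rw [h1, h2] at e1
      rw [g1, g2] at e2
      simp only [hrz, hcz, hP, hQ] at e1 e2
      rcases hB γ with h4 | h4 <;> rcases hB (γ₂ * Equiv.swap k z) with h5 | h5 <;>
        rw [h4] at e1 <;> rw [h5] at e2 <;> linarith



lemma key01 (hf : ∀ γ, f γ = c1 + ∑ w, N w (γ w)) (hB : ∀ γ, f γ = 0 ∨ f γ = 1)
    (hrz : ∀ j, N z j = 0) (hcz : ∀ i, N i z = 0)
    (h01 : ∀ i j, N i j = 0 ∨ N i j = 1) {i k a b : Fin n}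
    (hik : i ≠ k) (hab : a ≠ b) (ha : N i a = 1) (hb : N k b = 1) : N k a = 1 := by
  have hiz : i ≠ z := fun h => by rw [h, hrz] at ha; norm_num at ha
  have haz : a ≠ z := fun h => by rw [h, hcz] at ha; norm_num at ha
  have hkz : k ≠ z := fun h => by rw [h, hrz] at hb; norm_num at hb
  have hbz : b ≠ z := fun h => by rw [h, hcz] at hb; norm_num at hb
  obtain ⟨γ, hγ⟩ := exists_perm_list [(k,b),(i,a),(z,z)]
    (by simp [hik.symm, hiz, hkz]) (by simp [hab.symm, haz, hbz])
  have h1 : γ k = b := hγ (k,b) (by simp)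
  have h2 : γ i = a := hγ (i,a) (by simp)
  have h3 : γ z = z := hγ (z,z) (by simp)
  have e1 := swapDiff f c1 N hf k i hik.symm γ
  set γ₂ := γ * Equiv.swap k i with hγ₂
  have g1 : γ₂ i = b := by rw [hγ₂, Equiv.Perm.mul_apply, Equiv.swap_apply_right, h1]
  have g2 : γ₂ z = z := by
    rw [hγ₂, Equiv.Perm.mul_apply, Equiv.swap_apply_of_ne_of_ne hkz.symm hiz.symm, h3]
  have e2 := swapDiff f c1 N hf i z hiz γ₂
  rw [h1, h2] at e1
  rw [g1, g2] at e2
  simp only [hrz, hcz, ha, hb] at e1 e2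
  rcases h01 k a with h4 | h4
  · rw [h4] at e1
    rcases hB γ with h5 | h5 <;> rcases hB (γ₂ * Equiv.swap i z) with h6 | h6 <;>
      rw [h5] at e1 <;> rw [h6] at e2 <;> linarith
  · exact h4

lemma contra4 (hf : ∀ γ, f γ = c1 + ∑ w, N w (γ w)) (hB : ∀ γ, f γ = 0 ∨ f γ = 1)
    (hrz : ∀ j, N z j = 0) (hcz : ∀ i, N i z = 0) {i k m a b w : Fin n}
    (him : i ≠ m) (hkm : k ≠ m) (hmz : m ≠ z) (hik : i ≠ k)
    (hab : a ≠ b) (haw : a ≠ w) (hbw : b ≠ w) (hwz : w ≠ z)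
    (h1 : N i a = 1) (h2 : N k b = 1) (h3 : N k w = 0) (h4 : N m a = 0) : False := by
  have hiz : i ≠ z := fun h => by rw [h, hrz] at h1; norm_num at h1
  have haz : a ≠ z := fun h => by rw [h, hcz] at h1; norm_num at h1
  have hkz : k ≠ z := fun h => by rw [h, hrz] at h2; norm_num at h2
  have hbz : b ≠ z := fun h => by rw [h, hcz] at h2; norm_num at h2
  obtain ⟨γ, hγ⟩ := exists_perm_list [(i,a),(k,b),(m,z),(z,w)]
    (by simp [hik, him, hiz, hkm, hkz, hmz])
    (by simp [hab, haz, haw, hbz, hbw, Ne.symm hwz])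
  have q1 : γ i = a := hγ (i,a) (by simp)
  have q2 : γ k = b := hγ (k,b) (by simp)
  have q3 : γ m = z := hγ (m,z) (by simp)
  have q4 : γ z = w := hγ (z,w) (by simp)
  have e1 := swapDiff f c1 N hf i m him γ
  set γ₂ := γ * Equiv.swap i m with hγ₂
  have g1 : γ₂ k = b := by
    rw [hγ₂, Equiv.Perm.mul_apply, Equiv.swap_apply_of_ne_of_ne hik.symm hkm, q2]
  have g2 : γ₂ z = w := by
    rw [hγ₂, Equiv.Perm.mul_apply, Equiv.swap_apply_of_ne_of_ne hiz.symm hmz.symm, q4]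
  have e2 := swapDiff f c1 N hf k z hkz γ₂
  rw [q1, q3] at e1
  rw [g1, g2] at e2
  simp only [hrz, hcz, h1, h2, h3, h4] at e1 e2
  rcases hB γ with h5 | h5 <;> rcases hB (γ₂ * Equiv.swap k z) with h6 | h6 <;>
    rw [h5] at e1 <;> rw [h6] at e2 <;> linarith


lemma main01 (hf : ∀ γ, f γ = c1 + ∑ w, N w (γ w)) (hB : ∀ γ, f γ = 0 ∨ f γ = 1)
    (hrz : ∀ j, N z j = 0) (hcz : ∀ i, N i z = 0)
    (h01 : ∀ i j, N i j = 0 ∨ N i j = 1) (α : Equiv.Perm (Fin n)) :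
    ∃ C : Finset (Fin n × Fin n), C.card ≤ 1 ∧ (∀ p ∈ C, α p.1 = p.2) ∧
      ∀ β : Equiv.Perm (Fin n), (∀ p ∈ C, β p.1 = p.2) → f β = f α := by
  by_cases hall0 : ∀ i j, N i j = 0
  · refine ⟨∅, by simp, by simp, fun β _ => ?_⟩
    rw [hf β, hf α]
    simp [hall0]
  push_neg at hall0
  obtain ⟨i₀, a₀, h0⟩ := hall0
  have ha₀ : N i₀ a₀ = 1 := (h01 i₀ a₀).resolve_left h0
  have hi₀z : i₀ ≠ z := fun h => by rw [h, hrz] at ha₀; norm_num at ha₀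
  have ha₀z : a₀ ≠ z := fun h => by rw [h, hcz] at ha₀; norm_num at ha₀
  -- the one-directional row transfer
  have row_imp : ∀ (i k x : Fin n), i ≠ k → (∃ b, N k b = 1) → N i x = 1 → N k x = 1 := by
    intro i k x hik ⟨b, hb⟩ hx
    by_cases hxb : x = b
    · rw [hxb]; exact hb
    · exact key01 f c1 N z hf hB hrz hcz h01 hik hxb hx hb
  have rowsEq : ∀ (i k : Fin n), (∃ a, N i a = 1) → (∃ b, N k b = 1) →
      ∀ x, N i x = N k x := by
    intro i k hi hk x
    by_cases hik : i = k
    · rw [hik]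
    · rcases h01 i x with h1 | h1 <;> rcases h01 k x with h2 | h2
      · rw [h1, h2]
      · rw [row_imp k i x (Ne.symm hik) hi h2] at h1; exact absurd h1 (by norm_num)
      · rw [h1, row_imp i k x hik hk h1]
      · rw [h1, h2]
  by_cases hrow : ∀ k j, N k j = 1 → k = i₀
  · -- single row i₀
    have hO : ∀ i j, i ≠ i₀ → N i j = 0 := by
      intro i j hi
      rcases h01 i j with h | h
      · exact h
      · exact absurd (hrow i j h) hi
    have hdep : ∀ δ : Equiv.Perm (Fin n), ∑ w, N w (δ w) = N i₀ (δ i₀) :=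
      fun δ => Fintype.sum_eq_single i₀ (fun w hw => hO w (δ w) hw)
    refine ⟨{(i₀, α i₀)}, by simp, ?_, ?_⟩
    · intro p hp
      rw [Finset.mem_singleton] at hp
      subst hp; rfl
    · intro β hβ
      have hb : β i₀ = α i₀ := hβ (i₀, α i₀) (Finset.mem_singleton_self _)
      rw [hf β, hf α, hdep, hdep, hb]
  push_neg at hrow
  obtain ⟨k₁, b₁, hk₁, hk₁i₀⟩ := hrow
  by_cases hcol : ∀ i j, N i j = 1 → j = a₀
  · -- single column a₀
    have hO : ∀ i j, j ≠ a₀ → N i j = 0 := by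
      intro i j hj
      rcases h01 i j with h | h
      · exact h
      · exact absurd (hcol i j h) hj
    have hdep : ∀ δ : Equiv.Perm (Fin n), ∑ w, N w (δ w) = N (δ.symm a₀) a₀ := by
      intro δ
      rw [Fintype.sum_eq_single (δ.symm a₀) (fun w hw => hO w (δ w)
        (fun h => hw (by rw [← h]; simp)))]
      simp
    refine ⟨{(α.symm a₀, a₀)}, by simp, ?_, ?_⟩
    · intro p hp
      rw [Finset.mem_singleton] at hp
      subst hp
      simp
    · intro β hβ
      have hb : β (α.symm a₀) = a₀ := hβ (α.symm a₀, a₀) (Finset.mem_singleton_self _)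
      have hb2 : β.symm a₀ = α.symm a₀ := by
        rw [Equiv.symm_apply_eq]
        exact hb.symm
      rw [hf β, hf α, hdep, hdep, hb2]
  push_neg at hcol
  obtain ⟨i₂, b₂, hi₂, hb₂a₀⟩ := hcol
  -- N i₀ b₂ = 1 and hence every nonzero row contains 1 at both a₀ and b₂
  have hi₀b₂ : N i₀ b₂ = 1 := by
    by_cases h : i₂ = i₀
    · rw [← h]; exact hi₂
    · exact row_imp i₂ i₀ b₂ h ⟨a₀, ha₀⟩ hi₂
  have hb₂z : b₂ ≠ z := fun h => by rw [h, hcz] at hi₀b₂; norm_num at hi₀b₂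
  by_cases hQ : ∀ i, i ≠ z → ∃ j, N i j = 1
  · -- all rows except z are nonzero hence all equal: f depends on β z
    have hEq : ∀ i, i ≠ z → ∀ j, N i j = N i₀ j := fun i hi =>
      rowsEq i i₀ (hQ i hi) ⟨a₀, ha₀⟩
    have hdep : ∀ δ : Equiv.Perm (Fin n),
        ∑ w, N w (δ w) = (∑ v, N i₀ v) - N i₀ (δ z) := by
      intro δ
      have e1 : ∀ w, N w (δ w) = N i₀ (δ w) - (if w = z then N i₀ (δ z) else 0) := by
        intro w
        by_cases hw : w = z
        · subst hw; rw [hrz]; simp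
        · simp [hw, hEq w hw]
      rw [Finset.sum_congr rfl (fun w _ => e1 w), Finset.sum_sub_distrib,
        Finset.sum_ite_eq' Finset.univ z, Equiv.sum_comp δ (N i₀)]
      simp
    refine ⟨{(z, α z)}, by simp, ?_, ?_⟩
    · intro p hp
      rw [Finset.mem_singleton] at hp
      subst hp; rfl
    · intro β hβ
      have hb : β z = α z := hβ (z, α z) (Finset.mem_singleton_self _)
      rw [hf β, hf α, hdep, hdep, hb]
  push_neg at hQ
  obtain ⟨m, hmz, hm⟩ := hQ
  have hmrow : ∀ j, N m j = 0 := fun j => (h01 m j).resolve_right (hm j)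
  have hmi₀ : m ≠ i₀ := fun h => by have := hmrow a₀; rw [h, ha₀] at this; norm_num at this
  have hk₁b₂ : N k₁ b₂ = 1 := row_imp i₀ k₁ b₂ (Ne.symm hk₁i₀) ⟨b₁, hk₁⟩ hi₀b₂
  by_cases hT : ∀ w, w ≠ z → N i₀ w = 1
  · -- all columns except z are equal: f depends on β.symm z
    have hColEq : ∀ i j, j ≠ z → N i j = N i a₀ := by
      intro i j hj
      by_cases hi : ∃ x, N i x = 1
      · rw [rowsEq i i₀ hi ⟨a₀, ha₀⟩ j, rowsEq i i₀ hi ⟨a₀, ha₀⟩ a₀, hT j hj, ha₀]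
      · push_neg at hi
        rw [(h01 i j).resolve_right (hi j), (h01 i a₀).resolve_right (hi a₀)]
    have hdep : ∀ δ : Equiv.Perm (Fin n),
        ∑ w, N w (δ w) = (∑ v, N v a₀) - N (δ.symm z) a₀ := by
      intro δ
      have e1 : ∀ w, N w (δ w) = N w a₀ - (if w = δ.symm z then N (δ.symm z) a₀ else 0) := by
        intro w
        by_cases hw : w = δ.symm z
        · subst hw
          rw [Equiv.apply_symm_apply, hcz]
          simp
        · have hz : δ w ≠ z := fun h => hw (by rw [← h]; simp)
          rw [hColEq w (δ w) hz]
          simp [hw]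
      rw [Finset.sum_congr rfl (fun w _ => e1 w), Finset.sum_sub_distrib,
        Finset.sum_ite_eq' Finset.univ (δ.symm z)]
      simp
    refine ⟨{(α.symm z, z)}, by simp, ?_, ?_⟩
    · intro p hp
      rw [Finset.mem_singleton] at hp
      subst hp
      simp
    · intro β hβ
      have hb : β (α.symm z) = z := hβ (α.symm z, z) (Finset.mem_singleton_self _)
      have hb2 : β.symm z = α.symm z := by
        rw [Equiv.symm_apply_eq]
        exact hb.symm
      rw [hf β, hf α, hdep, hdep, hb2]
  · push_neg at hT
    obtain ⟨w, hwz, hw1⟩ := hT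
    have hw0 : N i₀ w = 0 := (h01 i₀ w).resolve_right hw1
    have hk₁m : k₁ ≠ m := fun h => by
      have := hmrow b₂; rw [← h, hk₁b₂] at this; norm_num at this
    have haw : a₀ ≠ w := fun h => by rw [← h, ha₀] at hw0; norm_num at hw0
    have hbw : b₂ ≠ w := fun h => by rw [← h, hi₀b₂] at hw0; norm_num at hw0
    have h3 : N k₁ w = 0 := by
      rw [rowsEq k₁ i₀ ⟨b₁, hk₁⟩ ⟨a₀, ha₀⟩ w]; exact hw0
    exact absurd (contra4 f c1 N z hf hB hrz hcz (Ne.symm hmi₀) hk₁m hmz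
      (Ne.symm hk₁i₀) (Ne.symm hb₂a₀) haw hbw hwz ha₀ hk₁b₂ h3 (hmrow a₀)) not_false

end core

/-- A Boolean function on `S_n` of degree at most 1 has certificate
complexity at most 1. -/
theorem perm_degree_one_cert_complexity_le_one
    (n : ℕ) (f : Equiv.Perm (Fin n) → ℝ)
    (hBool : ∀ α, f α = 0 ∨ f α = 1)
    (hdeg : PermDegLE n 1 f) :
    ∀ α : Equiv.Perm (Fin n), ∃ C : Finset (Fin n × Fin n),
      C.card ≤ 1 ∧ IsPermCertFor n f α C := by
  intro α
  obtain ⟨c, M, hrep⟩ := rep_extract hdeg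
  rcases Nat.eq_zero_or_pos n with rfl | hn
  · refine ⟨∅, by simp, ?_, ?_⟩
    · intro p hp
      exact absurd hp (Finset.notMem_empty p)
    · intro β _
      have hβα : β = α := Equiv.ext (fun x => x.elim0)
      rw [hβα]
  · set z : Fin n := ⟨0, hn⟩ with hz
    set N : Fin n → Fin n → ℝ := fun i j => M i j - M i z - M z j + M z z with hN
    set c1 : ℝ := c + (∑ i, M i z) + (∑ j, M z j) - n * M z z with hc1
    have hfN : ∀ γ, f γ = c1 + ∑ w, N w (γ w) := by
      intro γ
      have e1 : ∑ w, N w (γ w)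
          = (∑ w, M w (γ w)) - (∑ w, M w z) - (∑ w, M z (γ w)) + (∑ _w : Fin n, M z z) := by
        rw [hN]
        rw [Finset.sum_add_distrib, Finset.sum_sub_distrib, Finset.sum_sub_distrib]
      have e2 : ∑ w, M z (γ w) = ∑ v, M z v := Equiv.sum_comp γ (fun v => M z v)
      have e3 : (∑ _w : Fin n, M z z) = n * M z z := by
        rw [Finset.sum_const, Finset.card_univ, Fintype.card_fin, nsmul_eq_mul]
      rw [e1, e2, e3, hrep γ, hc1]
      ring
    have hrzN : ∀ j, N z j = 0 := fun j => by rw [hN]; ring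
    have hczN : ∀ i, N i z = 0 := fun i => by rw [hN]; ring
    by_cases hneg : ∃ i j, N i j = -1
    · obtain ⟨i₁, j₁, hneg⟩ := hneg
      have h01' : ∀ i j, -N i j = 0 ∨ -N i j = 1 := by
        intro i j
        rcases entry_cases f c1 N z hfN hBool hrzN hczN i j with h | h | h
        · right; rw [h]; norm_num
        · left; rw [h]; norm_num
        · exact absurd (noMix f c1 N z hfN hBool hrzN hczN h hneg) not_false
      have hf' : ∀ γ, (fun γ => 1 - f γ) γ = (1 - c1) + ∑ w, (fun i j => -N i j) w (γ w) := by
        intro γ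
        simp only
        rw [hfN γ, Finset.sum_neg_distrib]
        ring
      have hB' : ∀ γ, (fun γ => 1 - f γ) γ = 0 ∨ (fun γ => 1 - f γ) γ = 1 := by
        intro γ
        rcases hBool γ with h | h <;> simp [h]
      obtain ⟨C, h1, h2, h3⟩ := main01 (fun γ => 1 - f γ) (1 - c1) (fun i j => -N i j) z
        hf' hB' (fun j => by show -N z j = 0; rw [hrzN]; norm_num) (fun i => by show -N i z = 0; rw [hczN]; norm_num) h01' α
      refine ⟨C, h1, h2, fun β hβ => ?_⟩
      have := h3 β hβ
      linarith
    · push_neg at hneg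
      have h01 : ∀ i j, N i j = 0 ∨ N i j = 1 := by
        intro i j
        rcases entry_cases f c1 N z hfN hBool hrzN hczN i j with h | h | h
        · exact absurd h (hneg i j)
        · exact Or.inl h
        · exact Or.inr h
      obtain ⟨C, h1, h2, h3⟩ := main01 f c1 N z hfN hBool hrzN hczN h01 α
      exact ⟨C, h1, h2, h3⟩
end

section
/- Let f : S_n → {0,1} be the characteristic function of a 2-intersecting family, and suppose C(f) ≤ n − 2. If f(α) = f(β) = 1 and C_α, C_β are minimum certificates for α and β respectively (with respect to f), then |C_α ∩ C_β| ≥ 2 (as subsets of [n] × [n]). -/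
/-- Given sets `A, B` of the same size `m ≥ 2` and a map `g` injective on `A`,
there is an injection `φ` from `A` into `B` avoiding `g` pointwise on `A`. -/
lemma avoid_bij {X : Type*} [DecidableEq X] :
    ∀ m : ℕ, 2 ≤ m → ∀ (A B : Finset X) (g : X → X), A.card = m → B.card = m →
    Set.InjOn g ↑A →
    ∃ φ : X → X, Set.InjOn φ ↑A ∧ (∀ x ∈ A, φ x ∈ B) ∧ ∀ x ∈ A, φ x ≠ g x := by
  intro m hm
  induction m, hm using Nat.le_induction with
  | base =>
    intro A B g hA hB hg
    obtain ⟨a1, a2, ha, rfl⟩ := Finset.card_eq_two.mp hA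
    obtain ⟨b1, b2, hb, rfl⟩ := Finset.card_eq_two.mp hB
    have ha1 : a1 ∈ ({a1, a2} : Finset X) := by simp
    have ha2 : a2 ∈ ({a1, a2} : Finset X) := by simp
    by_cases hcase : g a1 = b1 ∨ g a2 = b2
    · refine ⟨fun x => if x = a1 then b2 else b1, ?_, ?_, ?_⟩
      · intro x hx y hy hxy
        simp only [Finset.coe_insert, Set.mem_insert_iff, Finset.coe_singleton,
          Set.mem_singleton_iff] at hx hy
        rcases hx with rfl | rfl <;> rcases hy with rfl | rfl <;>
          simp_all [ha, Ne.symm ha]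
      · intro x hx
        by_cases h : x = a1 <;> simp [h]
      · intro x hx
        simp only [Finset.mem_insert, Finset.mem_singleton] at hx
        rcases hcase with h1 | h2
        · rcases hx with rfl | rfl
          · beta_reduce; rw [if_pos rfl, h1]; exact hb.symm
          · have hxa : x ≠ a1 := Ne.symm ha
            simp only [hxa, if_false]
            intro hc
            exact ha (hg (by simp) (by simp) (by rw [h1, ← hc]))
        · rcases hx with rfl | rfl
          · beta_reduce; rw [if_pos rfl]
            intro hc
            exact ha (hg (by simp) (by simp) (by rw [h2, ← hc]))
          · have hxa : x ≠ a1 := Ne.symm ha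
            simp only [hxa, if_false]
            rw [h2]; exact hb
    · push_neg at hcase
      refine ⟨fun x => if x = a1 then b1 else b2, ?_, ?_, ?_⟩
      · intro x hx y hy hxy
        simp only [Finset.coe_insert, Set.mem_insert_iff, Finset.coe_singleton,
          Set.mem_singleton_iff] at hx hy
        rcases hx with rfl | rfl <;> rcases hy with rfl | rfl <;>
          simp_all [ha, Ne.symm ha]
      · intro x hx
        by_cases h : x = a1 <;> simp [h]
      · intro x hx
        simp only [Finset.mem_insert, Finset.mem_singleton] at hx
        rcases hx with rfl | rfl
        · simpa using Ne.symm hcase.1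
        · have hxa : x ≠ a1 := Ne.symm ha
          simp only [hxa, if_false]
          exact Ne.symm hcase.2
  | succ m hm ih =>
    intro A B g hA hB hg
    have haA : A.Nonempty := by rw [← Finset.card_pos, hA]; omega
    obtain ⟨a, haA⟩ := haA
    have hbne : (B.erase (g a)).Nonempty := by
      rw [← Finset.card_pos]
      have := Finset.pred_card_le_card_erase (a := g a) (s := B)
      omega
    obtain ⟨b, hbB⟩ := hbne
    have hbB' : b ∈ B := Finset.mem_of_mem_erase hbB
    have hbg : b ≠ g a := Finset.ne_of_mem_erase hbB
    obtain ⟨φ', hinj', hmem', hav'⟩ := ih (A.erase a) (B.erase b) g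
      (by rw [Finset.card_erase_of_mem haA, hA]; rfl)
      (by rw [Finset.card_erase_of_mem hbB', hB]; rfl)
      (hg.mono (by intro x hx; exact Finset.mem_of_mem_erase hx))
    refine ⟨fun x => if x = a then b else φ' x, ?_, ?_, ?_⟩
    · intro x hx y hy hxy
      simp only [Finset.mem_coe] at hx hy
      by_cases hxa : x = a <;> by_cases hya : y = a
      · rw [hxa, hya]
      · exfalso
        have : y ∈ A.erase a := Finset.mem_erase.mpr ⟨hya, hy⟩
        have := hmem' y this
        simp only [hxa, if_pos rfl, hya, if_false] at hxy
        rw [← hxy] at this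
        exact (Finset.mem_erase.mp this).1 rfl
      · exfalso
        have : x ∈ A.erase a := Finset.mem_erase.mpr ⟨hxa, hx⟩
        have := hmem' x this
        simp only [hya, if_pos rfl, hxa, if_false] at hxy
        rw [hxy] at this
        exact (Finset.mem_erase.mp this).1 rfl
      · simp only [hxa, hya, if_false] at hxy
        exact hinj' (by simp [Finset.mem_erase, hxa, hx])
          (by simp [Finset.mem_erase, hya, hy]) hxy
    · intro x hx
      by_cases hxa : x = a
      · simp [hxa, hbB']
      · simp only [hxa, if_false]
        exact Finset.mem_of_mem_erase (hmem' x (Finset.mem_erase.mpr ⟨hxa, hx⟩))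
    · intro x hx
      by_cases hxa : x = a
      · simp [hxa, hbg]
      · simp only [hxa, if_false]
        exact hav' x (Finset.mem_erase.mpr ⟨hxa, hx⟩)

/-- Given a partial permutation `C` (witnessed by a permutation `α₀` extending it) with
`|C| + 2 ≤ n`, and any permutation `σ`, there is a permutation `τ` extending `C` which
agrees with `σ` only at points recorded in `C`. -/
lemma exists_avoiding_extension (n : ℕ) (C : Finset (Fin n × Fin n))
    (α₀ σ : Equiv.Perm (Fin n)) (hα₀ : ∀ p ∈ C, α₀ p.1 = p.2)
    (hcard : C.card + 2 ≤ n) :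
    ∃ τ : Equiv.Perm (Fin n), (∀ p ∈ C, τ p.1 = p.2) ∧
      ∀ i, τ i = σ i → (i, σ i) ∈ C := by
  classical
  set dom := C.image Prod.fst with hdomdef
  set ran := C.image Prod.snd with hrandef
  have hdomcard : dom.card = C.card := by
    apply Finset.card_image_of_injOn
    intro p hp q hq h
    have h2 : p.2 = q.2 := by rw [← hα₀ p hp, ← hα₀ q hq, h]
    exact Prod.ext h h2
  have hrancard : ran.card = C.card := by
    apply Finset.card_image_of_injOn
    intro p hp q hq h
    have h1 : p.1 = q.1 := α₀.injective (by rw [hα₀ p hp, hα₀ q hq]; exact h)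
    exact Prod.ext h1 h
  have hAcard : domᶜ.card = n - C.card := by
    rw [Finset.card_compl, hdomcard, Fintype.card_fin]
  have hBcard : ranᶜ.card = n - C.card := by
    rw [Finset.card_compl, hrancard, Fintype.card_fin]
  obtain ⟨φ, hφinj, hφmem, hφav⟩ := avoid_bij (n - C.card) (by omega) domᶜ ranᶜ σ
    hAcard hBcard (σ.injective.injOn)
  have hdomran : ∀ i ∈ dom, α₀ i ∈ ran := by
    intro i hi
    obtain ⟨p, hp, rfl⟩ := Finset.mem_image.mp hi
    rw [hα₀ p hp]
    exact Finset.mem_image.mpr ⟨p, hp, rfl⟩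
  set Fn : Fin n → Fin n := fun i => if i ∈ dom then α₀ i else φ i with hFn
  have hFinj : Function.Injective Fn := by
    intro x y h
    by_cases hx : x ∈ dom <;> by_cases hy : y ∈ dom <;>
      simp only [hFn, hx, hy, if_pos, if_false, if_true] at h
    · exact α₀.injective h
    · exfalso
      have h1 := hdomran x hx
      have h2 := hφmem y (Finset.mem_compl.mpr hy)
      rw [h] at h1
      exact Finset.mem_compl.mp h2 h1
    · exfalso
      have h1 := hdomran y hy
      have h2 := hφmem x (Finset.mem_compl.mpr hx)
      rw [← h] at h1
      exact Finset.mem_compl.mp h2 h1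
    · exact hφinj (Finset.mem_coe.mpr (Finset.mem_compl.mpr hx))
        (Finset.mem_coe.mpr (Finset.mem_compl.mpr hy)) h
  refine ⟨Equiv.ofBijective Fn (Finite.injective_iff_bijective.mp hFinj), ?_, ?_⟩
  · intro p hp
    have h1 : p.1 ∈ dom := Finset.mem_image.mpr ⟨p, hp, rfl⟩
    simp only [Equiv.ofBijective_apply, hFn, h1, if_true, if_pos]
    exact hα₀ p hp
  · intro i hi
    simp only [Equiv.ofBijective_apply, hFn] at hi
    by_cases hd : i ∈ dom
    · rw [if_pos hd] at hi
      obtain ⟨p, hp, hp1⟩ := Finset.mem_image.mp hd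
      have : p.2 = σ i := by rw [← hα₀ p hp, hp1, hi]
      have : p = (i, σ i) := Prod.ext hp1 this
      rwa [← this]
    · rw [if_neg hd] at hi
      exact absurd hi (hφav i (Finset.mem_compl.mpr hd))

/-- If `f` is the characteristic function of a 2-intersecting family of
permutations and `C(f) ≤ n - 2`, then minimum certificates of any two members of the
family intersect in at least two pairs. -/
theorem perm_min_certificates_two_intersect
    (n : ℕ) (F : Finset (Equiv.Perm (Fin n)))
    (hF : PermTwoIntersectingFamily n F)
    (f : Equiv.Perm (Fin n) → ℝ)
    (hf : ∀ α, f α = if α ∈ F then 1 else 0)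
    (hC : permCertComplexity n f ≤ n - 2)
    (α β : Equiv.Perm (Fin n)) (hα : f α = 1) (hβ : f β = 1)
    (Cα Cβ : Finset (Fin n × Fin n))
    (hCα : IsPermCertFor n f α Cα) (hCαmin : Cα.card = permCertComplexityAt n f α)
    (hCβ : IsPermCertFor n f β Cβ) (hCβmin : Cβ.card = permCertComplexityAt n f β) :
    2 ≤ (Cα ∩ Cβ).card := by
  classical
  have memF : ∀ γ : Equiv.Perm (Fin n), f γ = 1 → γ ∈ F := by
    intro γ hγ
    by_contra h
    rw [hf γ, if_neg h] at hγ
    norm_num at hγ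
  have hαF : α ∈ F := memF α hα
  have hβF : β ∈ F := memF β hβ
  have hn : 2 ≤ n := by
    obtain ⟨i, j, hij, -, -⟩ := hF α hαF β hβF
    have h1 : (i : ℕ) ≠ (j : ℕ) := fun h => hij (Fin.ext h)
    have h2 : (i : ℕ) < n := i.isLt
    have h3 : (j : ℕ) < n := j.isLt
    omega
  have hcardα : Cα.card + 2 ≤ n := by
    have h1 : permCertComplexityAt n f α ≤ permCertComplexity n f :=
      Finset.le_sup (Finset.mem_univ α)
    omega
  have hcardβ : Cβ.card + 2 ≤ n := by
    have h1 : permCertComplexityAt n f β ≤ permCertComplexity n f :=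
      Finset.le_sup (Finset.mem_univ β)
    omega
  obtain ⟨σ, hσext, hσav⟩ := exists_avoiding_extension n Cα α β hCα.1 hcardα
  have hσF : σ ∈ F := memF σ (by rw [hCα.2 σ hσext, hα])
  obtain ⟨τ, hτext, hτav⟩ := exists_avoiding_extension n Cβ β σ hCβ.1 hcardβ
  have hτF : τ ∈ F := memF τ (by rw [hCβ.2 τ hτext, hβ])
  obtain ⟨i, j, hij, hi, hj⟩ := hF σ hσF τ hτF
  have key : ∀ k : Fin n, σ k = τ k → (k, σ k) ∈ Cα ∩ Cβ := by
    intro k hk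
    have hβmem : (k, σ k) ∈ Cβ := hτav k hk.symm
    have hβk : β k = σ k := hCβ.1 (k, σ k) hβmem
    have hαmem : (k, β k) ∈ Cα := hσav k hβk.symm
    rw [hβk] at hαmem
    exact Finset.mem_inter.mpr ⟨hαmem, hβmem⟩
  have h1 := key i hi
  have h2 := key j hj
  have hne : (i, σ i) ≠ (j, σ j) := fun h => hij (congrArg Prod.fst h)
  have : 1 < (Cα ∩ Cβ).card := Finset.one_lt_card.mpr ⟨_, h1, _, h2, hne⟩
  omega
end

section
/- If n ≥ 8 and f : S_n → {0,1} has degree at most 2, then C(f) ≤ n − 2. -/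
lemma my_swap_disjoint {n : ℕ} {a b c d : Fin n} (hac : a ≠ c) (had : a ≠ d)
    (hbc : b ≠ c) (hbd : b ≠ d) :
    Equiv.Perm.Disjoint (Equiv.swap a b) (Equiv.swap c d) := by
  intro x
  rcases eq_or_ne x c with rfl | hxc
  · exact Or.inl (Equiv.swap_apply_of_ne_of_ne hac.symm hbc.symm)
  rcases eq_or_ne x d with rfl | hxd
  · exact Or.inl (Equiv.swap_apply_of_ne_of_ne had.symm hbd.symm)
  · exact Or.inr (Equiv.swap_apply_of_ne_of_ne hxc hxd)

lemma permMonomial_mul_swap {n : ℕ} (S : Finset (Fin n × Fin n)) (γ : Equiv.Perm (Fin n))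
    (x y : Fin n) (h : ∀ p ∈ S, p.1 ≠ x ∧ p.1 ≠ y) :
    permMonomial n S (γ * Equiv.swap x y) = permMonomial n S γ := by
  unfold permMonomial
  refine Finset.prod_congr rfl fun p hp => ?_
  have hxy := h p hp
  rw [Equiv.Perm.mul_apply, Equiv.swap_apply_of_ne_of_ne hxy.1 hxy.2]

lemma deriv3 {n : ℕ} (f : Equiv.Perm (Fin n) → ℝ) (hdeg : PermDegLE n 2 f)
    (a b c d u v : Fin n)
    (hac : a ≠ c) (had : a ≠ d) (hbc : b ≠ c) (hbd : b ≠ d)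
    (hau : a ≠ u) (hav : a ≠ v) (hbu : b ≠ u) (hbv : b ≠ v)
    (hcu : c ≠ u) (hcv : c ≠ v) (hdu : d ≠ u) (hdv : d ≠ v)
    (σ : Equiv.Perm (Fin n)) :
    f σ - f (σ * Equiv.swap a b) - f (σ * Equiv.swap c d) - f (σ * Equiv.swap u v)
      + f (σ * Equiv.swap a b * Equiv.swap c d) + f (σ * Equiv.swap a b * Equiv.swap u v)
      + f (σ * Equiv.swap c d * Equiv.swap u v)
      - f (σ * Equiv.swap a b * Equiv.swap c d * Equiv.swap u v) = 0 := by
  set s₁ := Equiv.swap a b with hs₁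
  set s₂ := Equiv.swap c d with hs₂
  set s₃ := Equiv.swap u v with hs₃
  have C12 : Commute s₁ s₂ := (my_swap_disjoint hac had hbc hbd).commute
  have C13 : Commute s₁ s₃ := (my_swap_disjoint hau hav hbu hbv).commute
  have C23 : Commute s₂ s₃ := (my_swap_disjoint hcu hcv hdu hdv).commute
  induction hdeg using Submodule.span_induction with
  | zero => simp
  | add g h _ _ hg hh =>
    simp only [Pi.add_apply]
    linarith
  | smul r g _ hg =>
    simp only [Pi.smul_apply, smul_eq_mul]
    linear_combination r * hg
  | mem g hg =>
    obtain ⟨S, hS, rfl⟩ := hg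
    have pig : (∀ p ∈ S, p.1 ≠ a ∧ p.1 ≠ b) ∨ (∀ p ∈ S, p.1 ≠ c ∧ p.1 ≠ d) ∨
        (∀ p ∈ S, p.1 ≠ u ∧ p.1 ≠ v) := by
      by_contra hcn
      push_neg at hcn
      obtain ⟨⟨p, hp, hp0⟩, ⟨q, hq, hq0⟩, ⟨r, hr, hr0⟩⟩ := hcn
      have hp' : p.1 = a ∨ p.1 = b := by tauto
      have hq' : q.1 = c ∨ q.1 = d := by tauto
      have hr' : r.1 = u ∨ r.1 = v := by tauto
      have hpq : p ≠ q := by rintro rfl; rcases hp' with h1|h1 <;> rcases hq' with h2|h2 <;> simp_all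
      have hpr : p ≠ r := by rintro rfl; rcases hp' with h1|h1 <;> rcases hr' with h2|h2 <;> simp_all
      have hqr : q ≠ r := by rintro rfl; rcases hq' with h1|h1 <;> rcases hr' with h2|h2 <;> simp_all
      have hsub : ({p, q, r} : Finset (Fin n × Fin n)) ⊆ S := by
        simp [Finset.insert_subset_iff, hp, hq, hr]
      have hcard : ({p, q, r} : Finset (Fin n × Fin n)).card = 3 := by
        rw [Finset.card_insert_of_notMem (by simp [hpq, hpr]),
          Finset.card_insert_of_notMem (by simp [hqr]), Finset.card_singleton]
      have := Finset.card_le_card hsub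
      omega
    rcases pig with hA | hA | hA
    · have e0 : permMonomial n S (σ * s₁) = permMonomial n S σ :=
        permMonomial_mul_swap S σ a b hA
      have e1 : permMonomial n S (σ * s₁ * s₂) = permMonomial n S (σ * s₂) := by
        rw [mul_assoc, C12.eq, ← mul_assoc]
        exact permMonomial_mul_swap S _ a b hA
      have e2 : permMonomial n S (σ * s₁ * s₃) = permMonomial n S (σ * s₃) := by
        rw [mul_assoc, C13.eq, ← mul_assoc]
        exact permMonomial_mul_swap S _ a b hA
      have e3 : permMonomial n S (σ * s₁ * s₂ * s₃) = permMonomial n S (σ * s₂ * s₃) := by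
        rw [show σ * s₁ * s₂ * s₃ = σ * s₂ * s₃ * s₁ by
          rw [mul_assoc σ, C12.eq, ← mul_assoc σ, mul_assoc (σ * s₂), C13.eq, ← mul_assoc]]
        exact permMonomial_mul_swap S _ a b hA
      rw [e0, e1, e2, e3]; ring
    · have e0 : permMonomial n S (σ * s₂) = permMonomial n S σ :=
        permMonomial_mul_swap S σ c d hA
      have e1 : permMonomial n S (σ * s₁ * s₂) = permMonomial n S (σ * s₁) :=
        permMonomial_mul_swap S _ c d hA
      have e2 : permMonomial n S (σ * s₂ * s₃) = permMonomial n S (σ * s₃) := by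
        rw [mul_assoc, C23.eq, ← mul_assoc]
        exact permMonomial_mul_swap S _ c d hA
      have e3 : permMonomial n S (σ * s₁ * s₂ * s₃) = permMonomial n S (σ * s₁ * s₃) := by
        rw [mul_assoc (σ * s₁), C23.eq, ← mul_assoc]
        exact permMonomial_mul_swap S _ c d hA
      rw [e0, e1, e2, e3]; ring
    · have e0 : permMonomial n S (σ * s₃) = permMonomial n S σ :=
        permMonomial_mul_swap S σ u v hA
      have e1 : permMonomial n S (σ * s₁ * s₃) = permMonomial n S (σ * s₁) :=
        permMonomial_mul_swap S _ u v hA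
      have e2 : permMonomial n S (σ * s₂ * s₃) = permMonomial n S (σ * s₂) :=
        permMonomial_mul_swap S _ u v hA
      have e3 : permMonomial n S (σ * s₁ * s₂ * s₃) = permMonomial n S (σ * s₁ * s₂) :=
        permMonomial_mul_swap S _ u v hA
      rw [e0, e1, e2, e3]; ring

lemma cert_of_swap {n : ℕ} (hn : 2 ≤ n) (f : Equiv.Perm (Fin n) → ℝ) (α : Equiv.Perm (Fin n))
    (i j : Fin n) (hij : i ≠ j) (hf : f (α * Equiv.swap i j) = f α) :
    permCertComplexityAt n f α ≤ n - 2 := by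
  set C : Finset (Fin n × Fin n) :=
    ((Finset.univ.erase i).erase j).image (fun k => (k, α k)) with hC
  have hcard : C.card = n - 2 := by
    rw [hC, Finset.card_image_of_injective _ (fun x y h => by simpa using congrArg Prod.fst h),
      Finset.card_erase_of_mem (by simp [hij.symm]), Finset.card_erase_of_mem (by simp),
      Finset.card_univ, Fintype.card_fin]
    omega
  have hsat : PermSatisfies n α C := by
    intro p hp
    rw [hC] at hp
    simp only [Finset.mem_image] at hp
    obtain ⟨k, _, rfl⟩ := hp
    rfl
  have hcert : ∀ β : Equiv.Perm (Fin n), PermSatisfies n β C → f β = f α := by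
    intro β hβ
    have hβk : ∀ k : Fin n, k ≠ i → k ≠ j → β k = α k := by
      intro k h1 h2
      exact hβ (k, α k) (by rw [hC]; simp [Finset.mem_image, Finset.mem_erase, h1, h2])
    have hcases : β = α ∨ β = α * Equiv.swap i j := by
      by_cases hbi : β i = α i
      · left
        have hbj : β j = α j := by
          obtain ⟨m, hm⟩ := β.surjective (α j)
          rcases eq_or_ne m i with rfl | hmi
          · exact absurd (α.injective ((hbi.symm.trans hm))) hij
          rcases eq_or_ne m j with rfl | hmj
          · exact hm
          · exact absurd (α.injective ((hβk m hmi hmj).symm.trans hm)) hmj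
        apply Equiv.ext
        intro k
        rcases eq_or_ne k i with rfl | h1
        · exact hbi
        rcases eq_or_ne k j with rfl | h2
        · exact hbj
        · exact hβk k h1 h2
      · right
        have hbij : β i = α j := by
          obtain ⟨m, hm⟩ := β.surjective (α j)
          rcases eq_or_ne m i with rfl | hmi
          · exact hm
          rcases eq_or_ne m j with hmj | hmj
          · exfalso
            rw [hmj] at hm
            obtain ⟨m', hm'⟩ := β.surjective (α i)
            rcases eq_or_ne m' i with hmi' | hmi'
            · rw [hmi'] at hm'; exact hbi hm'
            rcases eq_or_ne m' j with hmj' | hmj'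
            · rw [hmj'] at hm'
              exact hij (α.injective (hm'.symm.trans hm))
            · exact hmi' (α.injective ((hβk m' hmi' hmj').symm.trans hm'))
          · exact absurd (α.injective ((hβk m hmi hmj).symm.trans hm)) hmj
        have hbji : β j = α i := by
          obtain ⟨m', hm'⟩ := β.surjective (α i)
          rcases eq_or_ne m' i with rfl | hmi'
          · exact absurd hm' hbi
          rcases eq_or_ne m' j with rfl | hmj'
          · exact hm'
          · exact absurd (α.injective ((hβk m' hmi' hmj').symm.trans hm')) hmi'
        apply Equiv.ext
        intro k
        rcases eq_or_ne k i with rfl | h1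
        · rw [Equiv.Perm.mul_apply, Equiv.swap_apply_left]; exact hbij
        rcases eq_or_ne k j with rfl | h2
        · rw [Equiv.Perm.mul_apply, Equiv.swap_apply_right]; exact hbji
        · rw [Equiv.Perm.mul_apply, Equiv.swap_apply_of_ne_of_ne h1 h2]; exact hβk k h1 h2
    rcases hcases with rfl | rfl
    · rfl
    · exact hf
  exact Nat.sInf_le ⟨C, hcard, hsat, hcert⟩

lemma no_all_flip {n : ℕ} (hn : 8 ≤ n) (f : Equiv.Perm (Fin n) → ℝ)
    (hBool : ∀ α, f α = 0 ∨ f α = 1) (hdeg : PermDegLE n 2 f)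
    (α : Equiv.Perm (Fin n))
    (h : ∀ i j : Fin n, i ≠ j → f (α * Equiv.swap i j) ≠ f α) : False := by
  have hk : Function.Injective (Fin.castLE hn) := Fin.castLE_injective hn
  set k : Fin 8 → Fin n := Fin.castLE hn with hkdef
  have hne : ∀ i j : Fin 8, i ≠ j → k i ≠ k j := fun i j hij => fun e => hij (hk e)
  have D1 := deriv3 f hdeg (k 6) (k 7) (k 0) (k 1) (k 2) (k 3)
    (hne 6 0 (by decide)) (hne 6 1 (by decide)) (hne 7 0 (by decide)) (hne 7 1 (by decide))
    (hne 6 2 (by decide)) (hne 6 3 (by decide)) (hne 7 2 (by decide)) (hne 7 3 (by decide))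
    (hne 0 2 (by decide)) (hne 0 3 (by decide)) (hne 1 2 (by decide)) (hne 1 3 (by decide)) α
  have D2 := deriv3 f hdeg (k 6) (k 7) (k 0) (k 1) (k 4) (k 5)
    (hne 6 0 (by decide)) (hne 6 1 (by decide)) (hne 7 0 (by decide)) (hne 7 1 (by decide))
    (hne 6 4 (by decide)) (hne 6 5 (by decide)) (hne 7 4 (by decide)) (hne 7 5 (by decide))
    (hne 0 4 (by decide)) (hne 0 5 (by decide)) (hne 1 4 (by decide)) (hne 1 5 (by decide)) α
  have D3 := deriv3 f hdeg (k 6) (k 7) (k 2) (k 3) (k 4) (k 5)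
    (hne 6 2 (by decide)) (hne 6 3 (by decide)) (hne 7 2 (by decide)) (hne 7 3 (by decide))
    (hne 6 4 (by decide)) (hne 6 5 (by decide)) (hne 7 4 (by decide)) (hne 7 5 (by decide))
    (hne 2 4 (by decide)) (hne 2 5 (by decide)) (hne 3 4 (by decide)) (hne 3 5 (by decide))
    α
  have D4 := deriv3 f hdeg (k 0) (k 1) (k 2) (k 3) (k 4) (k 5)
    (hne 0 2 (by decide)) (hne 0 3 (by decide)) (hne 1 2 (by decide)) (hne 1 3 (by decide))
    (hne 0 4 (by decide)) (hne 0 5 (by decide)) (hne 1 4 (by decide)) (hne 1 5 (by decide))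
    (hne 2 4 (by decide)) (hne 2 5 (by decide)) (hne 3 4 (by decide)) (hne 3 5 (by decide))
    (α * Equiv.swap (k 6) (k 7))
  have hb : ∀ β, 0 ≤ f β ∧ f β ≤ 1 := fun β => by rcases hBool β with h' | h' <;> simp [h']
  rcases hBool α with ha | ha
  · have h01 : f (α * Equiv.swap (k 0) (k 1)) = 1 :=
      (hBool _).resolve_left fun h0 => h _ _ (hne 0 1 (by decide)) (h0.trans ha.symm)
    have h23 : f (α * Equiv.swap (k 2) (k 3)) = 1 :=
      (hBool _).resolve_left fun h0 => h _ _ (hne 2 3 (by decide)) (h0.trans ha.symm)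
    have h45 : f (α * Equiv.swap (k 4) (k 5)) = 1 :=
      (hBool _).resolve_left fun h0 => h _ _ (hne 4 5 (by decide)) (h0.trans ha.symm)
    have h67 : f (α * Equiv.swap (k 6) (k 7)) = 1 :=
      (hBool _).resolve_left fun h0 => h _ _ (hne 6 7 (by decide)) (h0.trans ha.symm)
    simp only [ha, h01, h23, h45, h67] at D1 D2 D3 D4
    linarith [D1, D2, D3, D4,
      (hb (α * Equiv.swap (k 6) (k 7) * Equiv.swap (k 0) (k 1))).1,
      (hb (α * Equiv.swap (k 6) (k 7) * Equiv.swap (k 0) (k 1))).2,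
      (hb (α * Equiv.swap (k 6) (k 7) * Equiv.swap (k 2) (k 3))).1,
      (hb (α * Equiv.swap (k 6) (k 7) * Equiv.swap (k 2) (k 3))).2,
      (hb (α * Equiv.swap (k 6) (k 7) * Equiv.swap (k 4) (k 5))).1,
      (hb (α * Equiv.swap (k 6) (k 7) * Equiv.swap (k 4) (k 5))).2,
      (hb (α * Equiv.swap (k 0) (k 1) * Equiv.swap (k 2) (k 3))).1,
      (hb (α * Equiv.swap (k 0) (k 1) * Equiv.swap (k 2) (k 3))).2,
      (hb (α * Equiv.swap (k 0) (k 1) * Equiv.swap (k 4) (k 5))).1,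
      (hb (α * Equiv.swap (k 0) (k 1) * Equiv.swap (k 4) (k 5))).2,
      (hb (α * Equiv.swap (k 2) (k 3) * Equiv.swap (k 4) (k 5))).1,
      (hb (α * Equiv.swap (k 2) (k 3) * Equiv.swap (k 4) (k 5))).2,
      (hb (α * Equiv.swap (k 6) (k 7) * Equiv.swap (k 0) (k 1) * Equiv.swap (k 2) (k 3))).1,
      (hb (α * Equiv.swap (k 6) (k 7) * Equiv.swap (k 0) (k 1) * Equiv.swap (k 2) (k 3))).2,
      (hb (α * Equiv.swap (k 6) (k 7) * Equiv.swap (k 0) (k 1) * Equiv.swap (k 4) (k 5))).1,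
      (hb (α * Equiv.swap (k 6) (k 7) * Equiv.swap (k 0) (k 1) * Equiv.swap (k 4) (k 5))).2,
      (hb (α * Equiv.swap (k 6) (k 7) * Equiv.swap (k 2) (k 3) * Equiv.swap (k 4) (k 5))).1,
      (hb (α * Equiv.swap (k 6) (k 7) * Equiv.swap (k 2) (k 3) * Equiv.swap (k 4) (k 5))).2,
      (hb (α * Equiv.swap (k 6) (k 7) * Equiv.swap (k 0) (k 1) * Equiv.swap (k 2) (k 3) *
        Equiv.swap (k 4) (k 5))).1,
      (hb (α * Equiv.swap (k 6) (k 7) * Equiv.swap (k 0) (k 1) * Equiv.swap (k 2) (k 3) *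
        Equiv.swap (k 4) (k 5))).2]
  · have h01 : f (α * Equiv.swap (k 0) (k 1)) = 0 :=
      (hBool _).resolve_right fun h0 => h _ _ (hne 0 1 (by decide)) (h0.trans ha.symm)
    have h23 : f (α * Equiv.swap (k 2) (k 3)) = 0 :=
      (hBool _).resolve_right fun h0 => h _ _ (hne 2 3 (by decide)) (h0.trans ha.symm)
    have h45 : f (α * Equiv.swap (k 4) (k 5)) = 0 :=
      (hBool _).resolve_right fun h0 => h _ _ (hne 4 5 (by decide)) (h0.trans ha.symm)
    have h67 : f (α * Equiv.swap (k 6) (k 7)) = 0 :=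
      (hBool _).resolve_right fun h0 => h _ _ (hne 6 7 (by decide)) (h0.trans ha.symm)
    simp only [ha, h01, h23, h45, h67] at D1 D2 D3 D4
    linarith [D1, D2, D3, D4,
      (hb (α * Equiv.swap (k 6) (k 7) * Equiv.swap (k 0) (k 1))).1,
      (hb (α * Equiv.swap (k 6) (k 7) * Equiv.swap (k 0) (k 1))).2,
      (hb (α * Equiv.swap (k 6) (k 7) * Equiv.swap (k 2) (k 3))).1,
      (hb (α * Equiv.swap (k 6) (k 7) * Equiv.swap (k 2) (k 3))).2,
      (hb (α * Equiv.swap (k 6) (k 7) * Equiv.swap (k 4) (k 5))).1,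
      (hb (α * Equiv.swap (k 6) (k 7) * Equiv.swap (k 4) (k 5))).2,
      (hb (α * Equiv.swap (k 0) (k 1) * Equiv.swap (k 2) (k 3))).1,
      (hb (α * Equiv.swap (k 0) (k 1) * Equiv.swap (k 2) (k 3))).2,
      (hb (α * Equiv.swap (k 0) (k 1) * Equiv.swap (k 4) (k 5))).1,
      (hb (α * Equiv.swap (k 0) (k 1) * Equiv.swap (k 4) (k 5))).2,
      (hb (α * Equiv.swap (k 2) (k 3) * Equiv.swap (k 4) (k 5))).1,
      (hb (α * Equiv.swap (k 2) (k 3) * Equiv.swap (k 4) (k 5))).2,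
      (hb (α * Equiv.swap (k 6) (k 7) * Equiv.swap (k 0) (k 1) * Equiv.swap (k 2) (k 3))).1,
      (hb (α * Equiv.swap (k 6) (k 7) * Equiv.swap (k 0) (k 1) * Equiv.swap (k 2) (k 3))).2,
      (hb (α * Equiv.swap (k 6) (k 7) * Equiv.swap (k 0) (k 1) * Equiv.swap (k 4) (k 5))).1,
      (hb (α * Equiv.swap (k 6) (k 7) * Equiv.swap (k 0) (k 1) * Equiv.swap (k 4) (k 5))).2,
      (hb (α * Equiv.swap (k 6) (k 7) * Equiv.swap (k 2) (k 3) * Equiv.swap (k 4) (k 5))).1,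
      (hb (α * Equiv.swap (k 6) (k 7) * Equiv.swap (k 2) (k 3) * Equiv.swap (k 4) (k 5))).2,
      (hb (α * Equiv.swap (k 6) (k 7) * Equiv.swap (k 0) (k 1) * Equiv.swap (k 2) (k 3) *
        Equiv.swap (k 4) (k 5))).1,
      (hb (α * Equiv.swap (k 6) (k 7) * Equiv.swap (k 0) (k 1) * Equiv.swap (k 2) (k 3) *
        Equiv.swap (k 4) (k 5))).2]


/-- If `n ≥ 8` and `f : S_n → {0,1}` has degree at most 2, then
`C(f) ≤ n - 2`. -/
theorem perm_degree_two_cert_complexity_bound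
    (n : ℕ) (hn : 8 ≤ n) (f : Equiv.Perm (Fin n) → ℝ)
    (hBool : ∀ α, f α = 0 ∨ f α = 1)
    (hdeg : PermDegLE n 2 f) :
    permCertComplexity n f ≤ n - 2 := by
  refine Finset.sup_le fun α _ => ?_
  have key : ∃ i j : Fin n, i ≠ j ∧ f (α * Equiv.swap i j) = f α := by
    by_contra hcon
    push_neg at hcon
    exact no_all_flip hn f hBool hdeg α fun i j hij => hcon i j hij
  obtain ⟨i, j, hij, hf⟩ := key
  exact cert_of_swap (by omega) f α i j hij hf
end

section
/- Let n ≥ 2 and let f : S_n → {0,1} satisfy: f(α) = 1 implies α(n) = n. Define g : S_{n−1} → {0,1} by g(β) = f(β'), where β' ∈ S_n is the extension of β ∈ S_{n−1} with β'(n) = n. Then deg g ≤ max(deg f − 1, 0). -/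
/-- Extend a permutation of `Fin k` to a permutation of `Fin N` (where `N = k + 1`)
fixing the last point. -/
noncomputable def extPerm (k N : ℕ) (h : N = k + 1) (β : Equiv.Perm (Fin k)) :
    Equiv.Perm (Fin N) :=
  β.viaFintypeEmbedding (Fin.castLEEmb (by omega))

/-! Write `β̂` for the extension of `β ∈ S_m` fixing the last point `m`. For a weight `w`, the
linear map `T_w h (β) = h (β̂) + w ∑_{i < m} h (β̂ (i m))` (`restrictWithSwaps m w`) agrees with
`h (β̂)` whenever `h` vanishes off the stabilizer of `m`, since `β̂ (i m)` moves `m`.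
On a monomial `x_S`, restriction to the stabilizer lowers the degree as soon as `S` meets `m`
(writing `β̂ (i m) = (β(i) m) β̂` handles the pairs with first coordinate `m`). If `S` avoids `m`,
the translates by `(i m)` with `i` outside the domain of `S` reproduce `x_S`, so the top-degree
part of `T_w x_S` is `(1 + w (m - |S|)) x_S`, which vanishes for `|S| = d` when `w = -1/(m - d)`. -/

open Equiv Finset

lemma Equiv.Perm.eq_of_forall_ne_apply_eq {X : Type*} [DecidableEq X] [Fintype X]
    {α β : Perm X} (a : X) (h : ∀ i ≠ a, β i = α i) : β = α := by
  have hsupp : (α⁻¹ * β).support ⊆ {a} := fun i hi => by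
    by_contra hia
    exact Perm.mem_support.1 hi (by simp [h i (by simpa using hia)])
  have hle : #(α⁻¹ * β).support ≤ 1 := card_singleton a ▸ card_le_card hsupp
  have hempty : (α⁻¹ * β).support = ∅ :=
    card_eq_zero.1 (by have := (α⁻¹ * β).card_support_ne_one; omega)
  exact (inv_mul_eq_one.1 (Perm.support_eq_empty_iff.1 hempty)).symm

section Monomials

variable {n : ℕ}

def permDegLESubmodule (n d : ℕ) : Submodule ℝ (Perm (Fin n) → ℝ) :=
  Submodule.span ℝ {g | ∃ S : Finset (Fin n × Fin n), #S ≤ d ∧ g = permMonomial n S}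

lemma permMonomial_mem_permDegLESubmodule {S : Finset (Fin n × Fin n)} {d : ℕ} (hS : #S ≤ d) :
    permMonomial n S ∈ permDegLESubmodule n d :=
  Submodule.subset_span ⟨S, hS, rfl⟩

lemma permDegLESubmodule_mono {d e : ℕ} (h : d ≤ e) :
    permDegLESubmodule n d ≤ permDegLESubmodule n e :=
  Submodule.span_mono fun _ ⟨S, hS, hg⟩ => ⟨S, hS.trans h, hg⟩

lemma permMonomial_mul_right (S : Finset (Fin n × Fin n)) (γ τ : Perm (Fin n)) :
    permMonomial n S (γ * τ) =
      permMonomial n (S.map (τ.prodCongr (Equiv.refl _)).toEmbedding) γ := by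
  simp only [permMonomial, prod_map]
  rfl

lemma permMonomial_mul_left (S : Finset (Fin n × Fin n)) (τ γ : Perm (Fin n)) :
    permMonomial n S (τ * γ) =
      permMonomial n (S.map ((Equiv.refl _).prodCongr τ⁻¹).toEmbedding) γ := by
  simp only [permMonomial, prod_map]
  refine prod_congr rfl fun p _ => if_congr ?_ rfl rfl
  simp [eq_symm_apply]

lemma permMonomial_mul_right_of_forall_apply_fst {S : Finset (Fin n × Fin n)} {τ : Perm (Fin n)}
    (hτ : ∀ p ∈ S, τ p.1 = p.1) (γ : Perm (Fin n)) :
    permMonomial n S (γ * τ) = permMonomial n S γ :=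
  prod_congr rfl fun p hp => by rw [Perm.mul_apply, hτ p hp]

lemma permMonomial_eq_zero_of_not_injOn {S : Finset (Fin n × Fin n)}
    (hS : ¬ Set.InjOn Prod.fst (S : Set (Fin n × Fin n))) : permMonomial n S = 0 := by
  obtain ⟨p, hp, q, hq, hpq, hne⟩ : ∃ p ∈ S, ∃ q ∈ S, p.1 = q.1 ∧ p ≠ q := by
    simpa [Set.InjOn] using hS
  funext α
  by_cases hα : α p.1 = p.2
  · refine prod_eq_zero hq (if_neg fun hq' => hne (Prod.ext hpq ?_))
    rw [← hα, ← hq', hpq]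
  · exact prod_eq_zero hp (if_neg hα)

lemma exists_permMonomial_eq_single {m : ℕ} (α : Perm (Fin (m + 1))) :
    ∃ S : Finset (Fin (m + 1) × Fin (m + 1)), #S = m ∧ permMonomial (m + 1) S = Pi.single α 1 := by
  have hinj : Function.Injective fun i => (i, α i) := fun _ _ h => congrArg Prod.fst h
  refine ⟨(univ.erase 0).image fun i => (i, α i), by simp [card_image_of_injective _ hinj],
    funext fun β => ?_⟩
  rw [permMonomial, prod_image fun _ _ _ _ h => hinj h, prod_boole, Pi.single_apply]
  congr 1
  exact propext ⟨fun h => Perm.eq_of_forall_ne_apply_eq 0 (by simpa using h), fun h => by simp [h]⟩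

lemma permDegLE_of_succ {m : ℕ} (h : Perm (Fin (m + 1)) → ℝ) : PermDegLE (m + 1) m h := by
  rw [PermDegLE, ← univ_sum_single h]
  refine Submodule.sum_mem _ fun α _ => ?_
  obtain ⟨S, hS, hSα⟩ := exists_permMonomial_eq_single α
  rw [← mul_one (h α), ← smul_eq_mul, Pi.single_smul', ← hSα]
  exact Submodule.smul_mem _ _ (permMonomial_mem_permDegLESubmodule hS.le)

end Monomials

section Restriction

variable {m : ℕ}

lemma extPerm_castSucc (β : Perm (Fin m)) (i : Fin m) :
    extPerm m (m + 1) rfl β i.castSucc = (β i).castSucc :=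
  β.viaFintypeEmbedding_apply_image (Fin.castLEEmb _) i

lemma extPerm_last (β : Perm (Fin m)) : extPerm m (m + 1) rfl β (Fin.last m) = Fin.last m :=
  β.viaFintypeEmbedding_apply_notMem_range _ fun ⟨i, hi⟩ => Fin.castSucc_ne_last i hi

lemma extPerm_ne_last (β : Perm (Fin m)) {i : Fin (m + 1)} (hi : i ≠ Fin.last m) :
    extPerm m (m + 1) rfl β i ≠ Fin.last m := by
  obtain ⟨j, rfl⟩ := Fin.exists_castSucc_eq.2 hi
  rw [extPerm_castSucc]
  exact Fin.castSucc_ne_last _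

def castSuccPair (m : ℕ) : Fin m × Fin m ↪ Fin (m + 1) × Fin (m + 1) :=
  Fin.castSuccEmb.prodMap Fin.castSuccEmb

lemma mem_range_castSuccPair {p : Fin (m + 1) × Fin (m + 1)} :
    p ∈ Set.range (castSuccPair m) ↔ p.1 ≠ Fin.last m ∧ p.2 ≠ Fin.last m := by
  simp only [castSuccPair, Function.Embedding.coe_prodMap, Set.range_prodMap, Set.mem_prod,
    Set.mem_range, Fin.coe_castSuccEmb, Fin.exists_castSucc_eq]

noncomputable def lowerPairs (S : Finset (Fin (m + 1) × Fin (m + 1))) : Finset (Fin m × Fin m) :=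
  S.preimage (castSuccPair m) (castSuccPair m).injective.injOn

lemma extPerm_apply_eq_iff_of_not_mem_range (β : Perm (Fin m)) {p : Fin (m + 1) × Fin (m + 1)}
    (hp : p ∉ Set.range (castSuccPair m)) :
    extPerm m (m + 1) rfl β p.1 = p.2 ↔ p = (Fin.last m, Fin.last m) := by
  rw [mem_range_castSuccPair, not_and_or, not_ne_iff, not_ne_iff] at hp
  by_cases h1 : p.1 = Fin.last m
  · rw [h1, extPerm_last, Prod.ext_iff, eq_comm]
    simp [h1]
  · have h2 := hp.resolve_left h1
    simp [h1, h2, Prod.ext_iff, extPerm_ne_last β h1]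

noncomputable def restrictLast (m : ℕ) : (Perm (Fin (m + 1)) → ℝ) →ₗ[ℝ] (Perm (Fin m) → ℝ) :=
  LinearMap.funLeft ℝ ℝ (extPerm m (m + 1) rfl)

lemma restrictLast_apply (h : Perm (Fin (m + 1)) → ℝ) (β : Perm (Fin m)) :
    restrictLast m h β = h (extPerm m (m + 1) rfl β) := rfl

lemma restrictLast_permMonomial (S : Finset (Fin (m + 1) × Fin (m + 1))) :
    restrictLast m (permMonomial (m + 1) S) =
      (∏ p ∈ S with p ∉ Set.range (castSuccPair m),
        if p = (Fin.last m, Fin.last m) then (1 : ℝ) else 0) • permMonomial m (lowerPairs S) := by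
  funext β
  rw [restrictLast_apply, Pi.smul_apply, smul_eq_mul, permMonomial,
    ← prod_filter_mul_prod_filter_not S (· ∈ Set.range (castSuccPair m)), mul_comm]
  congr 1
  · exact prod_congr rfl fun p hp =>
      if_congr (extPerm_apply_eq_iff_of_not_mem_range β (mem_filter.1 hp).2) rfl rfl
  · rw [permMonomial, lowerPairs, ← prod_preimage' _ _ (castSuccPair m).injective.injOn]
    refine prod_congr rfl fun q _ => if_congr ?_ rfl rfl
    simp [castSuccPair, extPerm_castSucc]

lemma restrictLast_permMonomial_of_forall {S : Finset (Fin (m + 1) × Fin (m + 1))}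
    (hS : ∀ p ∈ S, p.1 ≠ Fin.last m ∧ p.2 ≠ Fin.last m) :
    restrictLast m (permMonomial (m + 1) S) = permMonomial m (lowerPairs S) := by
  rw [restrictLast_permMonomial,
    filter_false_of_mem fun p hp => not_not.2 (mem_range_castSuccPair.2 (hS p hp)),
    prod_empty, one_smul]

lemma card_lowerPairs_of_forall {S : Finset (Fin (m + 1) × Fin (m + 1))}
    (hS : ∀ p ∈ S, p.1 ≠ Fin.last m ∧ p.2 ≠ Fin.last m) : #(lowerPairs S) = #S := by
  rw [lowerPairs, card_preimage, filter_true_of_mem fun p hp => mem_range_castSuccPair.2 (hS p hp)]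

lemma restrictLast_permMonomial_mem_of_exists {S : Finset (Fin (m + 1) × Fin (m + 1))}
    (hS : ∃ p ∈ S, p.1 = Fin.last m ∨ p.2 = Fin.last m) :
    restrictLast m (permMonomial (m + 1) S) ∈ permDegLESubmodule m (#S - 1) := by
  rw [restrictLast_permMonomial]
  refine Submodule.smul_mem _ _ (permMonomial_mem_permDegLESubmodule ?_)
  obtain ⟨p, hp, hlast⟩ := hS
  have hlt : #{p ∈ S | p ∈ Set.range (castSuccPair m)} < #S :=
    card_lt_card (filter_ssubset.2 ⟨p, hp, by rw [mem_range_castSuccPair]; tauto⟩)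
  rw [lowerPairs, card_preimage]
  omega

lemma restrictLast_permMonomial_mul_right_mem {S : Finset (Fin (m + 1) × Fin (m + 1))}
    {τ : Perm (Fin (m + 1))} (hS : ∃ p ∈ S, τ p.1 = Fin.last m ∨ p.2 = Fin.last m) :
    restrictLast m (LinearMap.funLeft ℝ ℝ (· * τ) (permMonomial (m + 1) S)) ∈
      permDegLESubmodule m (#S - 1) := by
  obtain ⟨p, hp, hlast⟩ := hS
  have hτ : LinearMap.funLeft ℝ ℝ (· * τ) (permMonomial (m + 1) S) =
      permMonomial (m + 1) (S.map (τ.prodCongr (Equiv.refl _)).toEmbedding) :=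
    funext fun γ => permMonomial_mul_right S γ τ
  rw [hτ, ← card_map (τ.prodCongr (Equiv.refl _)).toEmbedding]
  exact restrictLast_permMonomial_mem_of_exists ⟨_, mem_map_of_mem _ hp, hlast⟩

lemma restrictLast_permMonomial_mul_left_mem {S : Finset (Fin (m + 1) × Fin (m + 1))}
    {τ : Perm (Fin (m + 1))} (hS : ∃ p ∈ S, p.1 = Fin.last m ∨ τ⁻¹ p.2 = Fin.last m) :
    restrictLast m (LinearMap.funLeft ℝ ℝ (τ * ·) (permMonomial (m + 1) S)) ∈
      permDegLESubmodule m (#S - 1) := by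
  obtain ⟨p, hp, hlast⟩ := hS
  have hτ : LinearMap.funLeft ℝ ℝ (τ * ·) (permMonomial (m + 1) S) =
      permMonomial (m + 1) (S.map ((Equiv.refl _).prodCongr τ⁻¹).toEmbedding) :=
    funext fun γ => permMonomial_mul_left S τ γ
  rw [hτ, ← card_map ((Equiv.refl _).prodCongr τ⁻¹).toEmbedding]
  exact restrictLast_permMonomial_mem_of_exists ⟨_, mem_map_of_mem _ hp, hlast⟩

end Restriction

section RestrictWithSwaps

variable {m : ℕ}

noncomputable def restrictWithSwaps (m : ℕ) (w : ℝ) :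
    (Perm (Fin (m + 1)) → ℝ) →ₗ[ℝ] (Perm (Fin m) → ℝ) :=
  restrictLast m + w • ∑ i : Fin m,
    restrictLast m ∘ₗ LinearMap.funLeft ℝ ℝ (· * swap i.castSucc (Fin.last m))

lemma restrictWithSwaps_apply (w : ℝ) (h : Perm (Fin (m + 1)) → ℝ) (β : Perm (Fin m)) :
    restrictWithSwaps m w h β = h (extPerm m (m + 1) rfl β) +
      w * ∑ i : Fin m, h (extPerm m (m + 1) rfl β * swap i.castSucc (Fin.last m)) := by
  simp [restrictWithSwaps, restrictLast_apply, LinearMap.funLeft_apply]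

lemma restrictWithSwaps_eq_restrictLast {h : Perm (Fin (m + 1)) → ℝ}
    (hh : ∀ α, α (Fin.last m) ≠ Fin.last m → h α = 0) (w : ℝ) :
    restrictWithSwaps m w h = restrictLast m h := by
  funext β
  have hswap (i : Fin m) : h (extPerm m (m + 1) rfl β * swap i.castSucc (Fin.last m)) = 0 :=
    hh _ (by simp [extPerm_castSucc, Fin.castSucc_ne_last])
  simp [restrictWithSwaps_apply, restrictLast_apply, hswap]

lemma restrictWithSwaps_eq_mul_left (w : ℝ) :
    restrictWithSwaps m w = restrictLast m + w • ∑ j : Fin m,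
      restrictLast m ∘ₗ LinearMap.funLeft ℝ ℝ (swap j.castSucc (Fin.last m) * ·) := by
  refine LinearMap.ext fun h => funext fun β => ?_
  have hsum : ∑ i : Fin m, h (extPerm m (m + 1) rfl β * swap i.castSucc (Fin.last m)) =
      ∑ j : Fin m, h (swap j.castSucc (Fin.last m) * extPerm m (m + 1) rfl β) := by
    simp only [mul_swap_eq_swap_mul, extPerm_castSucc, extPerm_last]
    exact Equiv.sum_comp β fun j : Fin m =>
      h (swap j.castSucc (Fin.last m) * extPerm m (m + 1) rfl β)
  simp [restrictWithSwaps_apply, hsum, restrictLast_apply, LinearMap.funLeft_apply]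

lemma restrictWithSwaps_permMonomial_mem_of_snd {S : Finset (Fin (m + 1) × Fin (m + 1))}
    (hS : ∃ p ∈ S, p.2 = Fin.last m) (w : ℝ) :
    restrictWithSwaps m w (permMonomial (m + 1) S) ∈ permDegLESubmodule m (#S - 1) := by
  obtain ⟨p, hp, hp2⟩ := hS
  simp only [restrictWithSwaps, LinearMap.add_apply, LinearMap.smul_apply, LinearMap.sum_apply,
    LinearMap.comp_apply]
  refine add_mem (restrictLast_permMonomial_mem_of_exists ⟨p, hp, .inr hp2⟩)
    (Submodule.smul_mem _ _ (Submodule.sum_mem _ fun i _ =>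
      restrictLast_permMonomial_mul_right_mem ⟨p, hp, .inr hp2⟩))

lemma restrictWithSwaps_permMonomial_mem_of_fst {S : Finset (Fin (m + 1) × Fin (m + 1))}
    (hS : ∃ p ∈ S, p.1 = Fin.last m) (w : ℝ) :
    restrictWithSwaps m w (permMonomial (m + 1) S) ∈ permDegLESubmodule m (#S - 1) := by
  obtain ⟨p, hp, hp1⟩ := hS
  simp only [restrictWithSwaps_eq_mul_left, LinearMap.add_apply, LinearMap.smul_apply,
    LinearMap.sum_apply, LinearMap.comp_apply]
  refine add_mem (restrictLast_permMonomial_mem_of_exists ⟨p, hp, .inl hp1⟩)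
    (Submodule.smul_mem _ _ (Submodule.sum_mem _ fun j _ =>
      restrictLast_permMonomial_mul_left_mem ⟨p, hp, .inl hp1⟩))

lemma restrictWithSwaps_permMonomial_sub_mem {S : Finset (Fin (m + 1) × Fin (m + 1))}
    (hS : ∀ p ∈ S, p.1 ≠ Fin.last m ∧ p.2 ≠ Fin.last m)
    (hinj : Set.InjOn Prod.fst (S : Set (Fin (m + 1) × Fin (m + 1)))) (w : ℝ) :
    restrictWithSwaps m w (permMonomial (m + 1) S) -
        (1 + w * (m - #S : ℕ)) • permMonomial m (lowerPairs S) ∈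
      permDegLESubmodule m (#S - 1) := by
  set D : Finset (Fin m) := (S.image Prod.fst).preimage Fin.castSucc
    (Fin.castSucc_injective m).injOn
  have hD : #D = #S := by
    rw [card_preimage, filter_true_of_mem, card_image_of_injOn hinj]
    intro a ha
    obtain ⟨p, hp, rfl⟩ := mem_image.1 ha
    exact Fin.exists_castSucc_eq.2 (hS p hp).1
  set τ : Fin m → Perm (Fin (m + 1)) := fun i => swap i.castSucc (Fin.last m)
  have hfree : ∀ i ∈ Dᶜ, restrictLast m (LinearMap.funLeft ℝ ℝ (· * τ i)
      (permMonomial (m + 1) S)) = permMonomial m (lowerPairs S) := by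
    intro i hi
    have hfix : ∀ p ∈ S, τ i p.1 = p.1 := fun p hp => swap_apply_of_ne_of_ne
      (fun h => mem_compl.1 hi (by simpa [D] using ⟨p.2, h ▸ hp⟩)) (hS p hp).1
    rw [← restrictLast_permMonomial_of_forall hS]
    exact congrArg _ (funext (permMonomial_mul_right_of_forall_apply_fst hfix))
  have hbound : ∀ i ∈ D, restrictLast m (LinearMap.funLeft ℝ ℝ (· * τ i)
      (permMonomial (m + 1) S)) ∈ permDegLESubmodule m (#S - 1) := by
    intro i hi
    obtain ⟨p, hp, hpi⟩ : ∃ p ∈ S, p.1 = i.castSucc := by simpa [D] using hi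
    exact restrictLast_permMonomial_mul_right_mem ⟨p, hp, .inl (by simp [τ, hpi])⟩
  have hsplit : restrictWithSwaps m w (permMonomial (m + 1) S) -
      (1 + w * (m - #S : ℕ)) • permMonomial m (lowerPairs S) =
      w • ∑ i ∈ D, restrictLast m (LinearMap.funLeft ℝ ℝ (· * τ i) (permMonomial (m + 1) S)) := by
    simp only [restrictWithSwaps, LinearMap.add_apply, LinearMap.smul_apply, LinearMap.sum_apply,
      LinearMap.comp_apply]
    rw [← sum_add_sum_compl D, sum_congr rfl hfree, sum_const, card_compl, Fintype.card_fin, hD,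
      restrictLast_permMonomial_of_forall hS, ← Nat.cast_smul_eq_nsmul ℝ]
    module
  rw [hsplit]
  exact Submodule.smul_mem _ _ (Submodule.sum_mem _ hbound)

lemma restrictWithSwaps_permMonomial_mem {d : ℕ} (hd : d < m)
    {S : Finset (Fin (m + 1) × Fin (m + 1))} (hS : #S ≤ d) :
    restrictWithSwaps m (-((m - d : ℕ) : ℝ)⁻¹) (permMonomial (m + 1) S) ∈
      permDegLESubmodule m (d - 1) := by
  set w : ℝ := -((m - d : ℕ) : ℝ)⁻¹
  by_cases h2 : ∃ p ∈ S, p.2 = Fin.last m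
  · exact permDegLESubmodule_mono (by omega) (restrictWithSwaps_permMonomial_mem_of_snd h2 w)
  by_cases h1 : ∃ p ∈ S, p.1 = Fin.last m
  · exact permDegLESubmodule_mono (by omega) (restrictWithSwaps_permMonomial_mem_of_fst h1 w)
  push Not at h1 h2
  have hS' : ∀ p ∈ S, p.1 ≠ Fin.last m ∧ p.2 ≠ Fin.last m := fun p hp => ⟨h1 p hp, h2 p hp⟩
  by_cases hinj : Set.InjOn Prod.fst (S : Set (Fin (m + 1) × Fin (m + 1)))
  swap
  · rw [permMonomial_eq_zero_of_not_injOn hinj, map_zero]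
    exact zero_mem _
  have hsub := restrictWithSwaps_permMonomial_sub_mem hS' hinj w
  rcases hS.lt_or_eq with hlt | rfl
  · have hlow := permMonomial_mem_permDegLESubmodule (card_lowerPairs_of_forall hS').le
    have := add_mem (permDegLESubmodule_mono (Nat.sub_le _ _) hsub)
      (Submodule.smul_mem _ (1 + w * (m - #S : ℕ)) hlow)
    rw [sub_add_cancel] at this
    exact permDegLESubmodule_mono (by omega) this
  · have hc : 1 + w * (m - #S : ℕ) = 0 := by
      have : ((m - #S : ℕ) : ℝ) ≠ 0 := Nat.cast_ne_zero.2 (by omega)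
      rw [neg_mul, inv_mul_cancel₀ this, add_neg_cancel]
    rwa [hc, zero_smul, sub_zero] at hsub

lemma restrictWithSwaps_mem {d : ℕ} (hd : d < m) {f : Perm (Fin (m + 1)) → ℝ}
    (hf : PermDegLE (m + 1) d f) :
    PermDegLE m (d - 1) (restrictWithSwaps m (-((m - d : ℕ) : ℝ)⁻¹) f) :=
  (Submodule.map_span_le _ _ _).2
    (by rintro _ ⟨S, hS, rfl⟩; exact restrictWithSwaps_permMonomial_mem hd hS)
    (Submodule.mem_map_of_mem hf)

end RestrictWithSwaps

/-- Degree reduction for the symmetric group: if `f : S_n → {0,1}`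
vanishes outside the coset `{α : α(n) = n}`, then the restriction `g` of `f` to that
coset (a function on `S_{n-1}`) satisfies `deg g ≤ max (deg f - 1) 0`. -/
theorem perm_degree_reduction
    (n : ℕ) (hn : 2 ≤ n) (f : Equiv.Perm (Fin n) → ℝ)
    (hBool : ∀ α, f α = 0 ∨ f α = 1)
    (hfix : ∀ α : Equiv.Perm (Fin n), f α = 1 → α ⟨n - 1, by omega⟩ = ⟨n - 1, by omega⟩)
    (g : Equiv.Perm (Fin (n - 1)) → ℝ)
    (hg : ∀ β : Equiv.Perm (Fin (n - 1)), g β = f (extPerm (n - 1) n (by omega) β)) :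
    permDeg (n - 1) g ≤ max (permDeg n f - 1) 0 := by
  obtain ⟨m, rfl⟩ : ∃ m, n = m + 1 + 1 := ⟨n - 2, by omega⟩
  have hsupp : ∀ α : Perm (Fin (m + 1 + 1)), α (Fin.last _) ≠ Fin.last _ → f α = 0 :=
    fun α hα => (hBool α).resolve_right fun h => hα (hfix α h)
  have hg_eq : g = restrictLast (m + 1) f := funext hg
  have hf : PermDegLE (m + 1 + 1) (permDeg (m + 1 + 1) f) f :=
    Nat.sInf_mem (s := {d | PermDegLE (m + 1 + 1) d f}) ⟨m + 1, permDegLE_of_succ f⟩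
  rw [max_eq_left (Nat.zero_le _)]
  apply Nat.sInf_le
  rcases lt_or_ge (permDeg (m + 1 + 1) f) (m + 1) with hd | hd
  · rw [hg_eq, ← restrictWithSwaps_eq_restrictLast hsupp]
    exact restrictWithSwaps_mem hd hf
  · exact permDegLESubmodule_mono (by omega) (permDegLE_of_succ g)
end

section
/- If f : M_{2n} → {0,1} has degree at most 1, then C(f) ≤ 2, i.e., every perfect matching m ∈ M_{2n} has a certificate for m (with respect to f) of size at most 2. -/
/-- A perfect matching of the complete graph on `[N]`, viewed as a fixed-point-free
involution of `Fin N`. -/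
def PM (N : ℕ) := {m : Fin N → Fin N // (∀ i, m i ≠ i) ∧ ∀ i, m (m i) = i}

instance (N : ℕ) : Fintype (PM N) := Subtype.fintype _
instance (N : ℕ) : DecidableEq (PM N) := fun a b =>
  decidable_of_iff (a.1 = b.1) Subtype.ext_iff.symm

/-- The edge set of a perfect matching. -/
def PM.edges {N : ℕ} (m : PM N) : Finset (Sym2 (Fin N)) :=
  Finset.univ.image fun i => s(i, m.1 i)

/-- Two perfect matchings are 2-intersecting: they share at least two edges. -/
def PMTwoIntersecting {N : ℕ} (m1 m2 : PM N) : Prop :=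
  2 ≤ (PM.edges m1 ∩ PM.edges m2).card

/-- A family of perfect matchings is 2-intersecting. -/
def PMTwoIntersectingFamily {N : ℕ} (F : Finset (PM N)) : Prop :=
  ∀ m1 ∈ F, ∀ m2 ∈ F, PMTwoIntersecting m1 m2

/-- A valid certificate: a set of pairwise disjoint non-loop unordered pairs. -/
def ValidEdgeSet {N : ℕ} (C : Finset (Sym2 (Fin N))) : Prop :=
  (∀ e ∈ C, ¬ e.IsDiag) ∧
    ∀ e ∈ C, ∀ f ∈ C, e ≠ f → ∀ a : Fin N, a ∈ e → a ∉ f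

/-- `m` satisfies the certificate `C`: every pair of `C` is an edge of `m`. -/
def PMSatisfies {N : ℕ} (m : PM N) (C : Finset (Sym2 (Fin N))) : Prop :=
  ∀ e ∈ C, e ∈ PM.edges m

/-- `C` is a certificate for `m` with respect to `f`. -/
def IsPMCertFor {N : ℕ} (f : PM N → ℝ) (m : PM N) (C : Finset (Sym2 (Fin N))) : Prop :=
  ValidEdgeSet C ∧ PMSatisfies m C ∧ ∀ m' : PM N, PMSatisfies m' C → f m' = f m

/-- The certificate complexity `C(f, m)`: the minimum size of a certificate for `m`. -/
noncomputable def pmCertComplexityAt {N : ℕ} (f : PM N → ℝ) (m : PM N) : ℕ :=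
  sInf {k | ∃ C : Finset (Sym2 (Fin N)), C.card = k ∧ IsPMCertFor f m C}

/-- The certificate complexity `C(f)`: the maximum of `C(f, m)` over all `m`. -/
noncomputable def pmCertComplexity {N : ℕ} (f : PM N → ℝ) : ℕ :=
  Finset.univ.sup fun m : PM N => pmCertComplexityAt f m

/-- The monomial `m ↦ ∏_{{i,j} ∈ S} x_{ij}(m)`. -/
def pmMonomial {N : ℕ} (S : Finset (Sym2 (Fin N))) : PM N → ℝ :=
  fun m => ∏ e ∈ S, if e ∈ PM.edges m then (1 : ℝ) else 0

/-- `f : M_N → ℝ` has degree at most `d`: it is a real linear combination of monomials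
`∏_{{i,j} ∈ S} x_{ij}` with `|S| ≤ d`. -/
def PMDegLE (N d : ℕ) (f : PM N → ℝ) : Prop :=
  f ∈ Submodule.span ℝ {g : PM N → ℝ |
    ∃ S : Finset (Sym2 (Fin N)), S.card ≤ d ∧ g = pmMonomial S}

/-- The degree of `f : M_N → ℝ`. -/
noncomputable def pmDeg (N : ℕ) (f : PM N → ℝ) : ℕ :=
  sInf {d | PMDegLE N d f}

/-- The coset `U_{i↔j} = {m : m(i) = j}`, for `p = (i, j)`. -/
def PMCoset {N : ℕ} (p : Fin N × Fin N) : Set (PM N) :=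
  {m : PM N | m.1 p.1 = p.2}

/-- The coset of all matchings containing the (non-loop) unordered pair `e`. -/
def PMCosetE {N : ℕ} (e : Sym2 (Fin N)) : Set (PM N) :=
  {m : PM N | e ∈ PM.edges m}

/-- `F` is `r`-covered: it is contained in a union of `r` pairwise compatible cosets. -/
def PMRCovered {N : ℕ} (r : ℕ) (F : Finset (PM N)) : Prop :=
  ∃ P : Finset (Sym2 (Fin N)), P.card = r ∧ (∀ e ∈ P, ¬ e.IsDiag) ∧
    (∀ e ∈ P, ∀ e' ∈ P, (PMCosetE e ∩ PMCosetE e').Nonempty) ∧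
    ↑F ⊆ ⋃ e ∈ P, PMCosetE e

/-- A `t`-coset of `M_N`: the set of all perfect matchings containing `t` fixed pairwise
disjoint edges. -/
def IsPMTCoset {N : ℕ} (t : ℕ) (S : Set (PM N)) : Prop :=
  ∃ C : Finset (Sym2 (Fin N)), C.card = t ∧ ValidEdgeSet C ∧
    S = {m : PM N | ∀ e ∈ C, e ∈ PM.edges m}


namespace PMAux


variable {N : ℕ}

lemma invol (m : PM N) (x : Fin N) : m.1 (m.1 x) = x := m.2.2 x
lemma fpf (m : PM N) (x : Fin N) : m.1 x ≠ x := m.2.1 x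
lemma minj (m : PM N) {a b : Fin N} (h : m.1 a = m.1 b) : a = b := by
  have := congrArg m.1 h; rwa [invol, invol] at this

/-- Conjugating an involution by the transposition `(v, m u)` : the matching obtained
from `m` by replacing edges `{u, m u}, {v, m v}` with `{u,v}, {m u, m v}`. -/
def pmSwap (m : PM N) (u v : Fin N) : PM N :=
  ⟨fun x => Equiv.swap v (m.1 u) (m.1 (Equiv.swap v (m.1 u) x)),
   fun x h => by
     have h2 := congrArg (Equiv.swap v (m.1 u)) h
     rw [Equiv.swap_apply_self] at h2
     exact fpf m _ h2,
   fun x => by simp only [Equiv.swap_apply_self, invol]⟩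

variable {m : PM N} {u v : Fin N}

lemma pmSwap_u (hvu : v ≠ u) (hvmu : v ≠ m.1 u) : (pmSwap m u v).1 u = v := by
  show Equiv.swap v (m.1 u) (m.1 (Equiv.swap v (m.1 u) u)) = v
  rw [Equiv.swap_apply_of_ne_of_ne hvu.symm (fpf m u).symm, Equiv.swap_apply_right]

lemma pmSwap_v (hvu : v ≠ u) (hvmu : v ≠ m.1 u) : (pmSwap m u v).1 v = u := by
  show Equiv.swap v (m.1 u) (m.1 (Equiv.swap v (m.1 u) v)) = u
  rw [Equiv.swap_apply_left, invol,
    Equiv.swap_apply_of_ne_of_ne hvu.symm (fpf m u).symm]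

lemma pmSwap_mu (hvu : v ≠ u) (hvmu : v ≠ m.1 u) : (pmSwap m u v).1 (m.1 u) = m.1 v := by
  show Equiv.swap v (m.1 u) (m.1 (Equiv.swap v (m.1 u) (m.1 u))) = m.1 v
  rw [Equiv.swap_apply_right, Equiv.swap_apply_of_ne_of_ne (fpf m v)
    (fun h => hvu (minj m h))]

lemma pmSwap_mv (hvu : v ≠ u) (hvmu : v ≠ m.1 u) : (pmSwap m u v).1 (m.1 v) = m.1 u := by
  show Equiv.swap v (m.1 u) (m.1 (Equiv.swap v (m.1 u) (m.1 v))) = m.1 u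
  rw [Equiv.swap_apply_of_ne_of_ne (fpf m v) (fun h => hvu (minj m h)), invol,
    Equiv.swap_apply_left]

lemma pmSwap_other (x : Fin N) (h1 : x ≠ u) (h2 : x ≠ v) (h3 : x ≠ m.1 u) (h4 : x ≠ m.1 v) :
    (pmSwap m u v).1 x = m.1 x := by
  show Equiv.swap v (m.1 u) (m.1 (Equiv.swap v (m.1 u) x)) = m.1 x
  rw [Equiv.swap_apply_of_ne_of_ne h2 h3,
    Equiv.swap_apply_of_ne_of_ne (fun h => h4 (by rw [← h, invol]))
      (fun h => h1 (minj m h))]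

/-- Key sum identity for a swap. -/
lemma sum_swap_diff (A : Sym2 (Fin N) → ℝ) (m : PM N) (u v : Fin N)
    (hvu : v ≠ u) (hvmu : v ≠ m.1 u) :
    ∑ x, A s(x, (pmSwap m u v).1 x) = (∑ x, A s(x, m.1 x)) +
      2 * (A s(u, v) + A s(m.1 u, m.1 v) - A s(u, m.1 u) - A s(v, m.1 v)) := by
  have huv : u ≠ v := hvu.symm
  have humu : u ≠ m.1 u := (fpf m u).symm
  have humv : u ≠ m.1 v := fun h => hvmu (by rw [h, invol])
  have hvmv : v ≠ m.1 v := (fpf m v).symm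
  have hmumv : m.1 u ≠ m.1 v := fun h => huv (minj m h)
  have hsub : ∑ x ∈ ({u, v, m.1 u, m.1 v} : Finset (Fin N)),
      (A s(x, (pmSwap m u v).1 x) - A s(x, m.1 x)) =
      ∑ x, (A s(x, (pmSwap m u v).1 x) - A s(x, m.1 x)) := by
    apply Finset.sum_subset (Finset.subset_univ _)
    intro x _ hx
    simp only [Finset.mem_insert, Finset.mem_singleton, not_or] at hx
    rw [pmSwap_other x hx.1 hx.2.1 hx.2.2.1 hx.2.2.2, sub_self]
  have hexp : ∑ x ∈ ({u, v, m.1 u, m.1 v} : Finset (Fin N)),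
      (A s(x, (pmSwap m u v).1 x) - A s(x, m.1 x)) =
      2 * (A s(u, v) + A s(m.1 u, m.1 v) - A s(u, m.1 u) - A s(v, m.1 v)) := by
    rw [Finset.sum_insert (by simp [huv, humu, humv]),
        Finset.sum_insert (by simp [hvmu, hvmv]),
        Finset.sum_insert (by simp [hmumv]),
        Finset.sum_singleton,
        pmSwap_u hvu hvmu, pmSwap_v hvu hvmu, pmSwap_mu hvu hvmu, pmSwap_mv hvu hvmu,
        invol m u, invol m v]
    have e1 : s(v, u) = s(u, v) := Sym2.eq_swap
    have e2 : s(m.1 u, u) = s(u, m.1 u) := Sym2.eq_swap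
    have e3 : s(m.1 v, m.1 u) = s(m.1 u, m.1 v) := Sym2.eq_swap
    have e4 : s(m.1 v, v) = s(v, m.1 v) := Sym2.eq_swap
    rw [e1, e2, e3, e4]; ring
  have h0 : ∑ x, (A s(x, (pmSwap m u v).1 x) - A s(x, m.1 x)) =
      2 * (A s(u, v) + A s(m.1 u, m.1 v) - A s(u, m.1 u) - A s(v, m.1 v)) := by
    rw [← hsub]; exact hexp
  rw [Finset.sum_sub_distrib] at h0
  linarith [h0]

/-- Every degree ≤ 1 function has an affine representation in vertex form. -/
lemma exists_rep (f : PM N → ℝ)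
    (h : f ∈ Submodule.span ℝ {g : PM N → ℝ |
      ∃ S : Finset (Sym2 (Fin N)), S.card ≤ 1 ∧ g = (fun m => ∏ e ∈ S, if e ∈ PM.edges m then (1 : ℝ) else 0)}) :
    ∃ c : ℝ, ∃ A : Sym2 (Fin N) → ℝ, ∀ m : PM N, f m = c + ∑ x, A s(x, m.1 x) := by
  induction h using Submodule.span_induction with
  | mem g hg =>
    obtain ⟨S, hS, rfl⟩ := hg
    rcases S.eq_empty_or_nonempty with rfl | ⟨e, heS⟩
    · exact ⟨1, 0, by intro m; simp⟩
    · have hSe : S = {e} := Finset.eq_singleton_iff_unique_mem.mpr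
        ⟨heS, fun b hb => Finset.card_le_one.mp hS b hb e heS⟩
      subst hSe
      refine ⟨0, fun e' => if e' = e then (1/2 : ℝ) else 0, fun m => ?_⟩
      have hfilt : ∑ x, (if s(x, m.1 x) = e then (1/2 : ℝ) else 0) =
          ∑ x ∈ Finset.univ.filter (fun x => s(x, m.1 x) = e), (1/2 : ℝ) := by
        rw [Finset.sum_filter]
      by_cases hme : e ∈ PM.edges m
      · obtain ⟨j, -, hj⟩ := Finset.mem_image.mp hme
        have hset : Finset.univ.filter (fun x => s(x, m.1 x) = e) = {j, m.1 j} := by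
          ext x
          simp only [Finset.mem_filter, Finset.mem_univ, true_and, Finset.mem_insert,
            Finset.mem_singleton, ← hj, Sym2.eq_iff]
          constructor
          · rintro (⟨h1, -⟩ | ⟨h1, -⟩)
            · exact Or.inl h1
            · exact Or.inr h1
          · rintro (rfl | rfl)
            · exact Or.inl ⟨rfl, rfl⟩
            · exact Or.inr ⟨rfl, invol m j⟩
        simp only [Finset.prod_singleton, hme, if_true, hfilt, hset]
        rw [Finset.sum_const, Finset.card_insert_of_notMem (by simp [(fpf m j).symm]),
          Finset.card_singleton]
        norm_num
      · have hset : Finset.univ.filter (fun x => s(x, m.1 x) = e) = ∅ := by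
          ext x
          simp only [Finset.mem_filter, Finset.mem_univ, true_and, Finset.notMem_empty,
            iff_false]
          intro hx
          exact hme (Finset.mem_image.mpr ⟨x, Finset.mem_univ x, hx⟩)
        simp only [Finset.prod_singleton, hme, if_false, hfilt, hset]
        simp
  | zero => exact ⟨0, 0, by intro m; simp⟩
  | add g1 g2 _ _ ih1 ih2 =>
    obtain ⟨c1, A1, h1⟩ := ih1
    obtain ⟨c2, A2, h2⟩ := ih2
    refine ⟨c1 + c2, A1 + A2, fun m => ?_⟩
    simp only [Pi.add_apply, h1 m, h2 m, Finset.sum_add_distrib]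
    ring
  | smul r g _ ih =>
    obtain ⟨c1, A1, h1⟩ := ih
    refine ⟨r * c1, r • A1, fun m => ?_⟩
    simp only [Pi.smul_apply, smul_eq_mul, h1 m, Finset.mul_sum, mul_add]


end PMAux

open PMAux in
/-- A Boolean function on `M_{2n}` of degree at most 1 has certificate
complexity at most 2. -/
theorem pm_degree_one_cert_complexity_le_two
    (n : ℕ) (f : PM (2 * n) → ℝ)
    (hBool : ∀ m, f m = 0 ∨ f m = 1)
    (hdeg : PMDegLE (2 * n) 1 f) :
    ∀ m : PM (2 * n), ∃ C : Finset (Sym2 (Fin (2 * n))),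
      C.card ≤ 2 ∧ IsPMCertFor f m C := by
  intro m
  obtain ⟨c, A, hrep⟩ := exists_rep f hdeg
  by_cases hA : ∀ u v : Fin (2 * n), v ≠ u → v ≠ m.1 u →
      A s(u, v) + A s(m.1 u, m.1 v) - A s(u, m.1 u) - A s(v, m.1 v) = 0
  · -- f is constant; empty certificate
    refine ⟨∅, by simp, ⟨by simp, by simp⟩, by intro e he; simp at he, ?_⟩
    intro m'' _
    -- conjugate matching
    set conj : PM (2 * n) := ⟨fun x => m.1 (m''.1 (m.1 x)),
      fun x h => by
        have h2 := congrArg m.1 h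
        rw [invol] at h2
        exact fpf m'' (m.1 x) h2,
      fun x => by simp only [invol]⟩ with hconj
    have hsum : ∑ x : Fin (2 * n), (A s(x, m''.1 x) + A s(m.1 x, m.1 (m''.1 x))
        - A s(x, m.1 x) - A s(m''.1 x, m.1 (m''.1 x))) = 0 := by
      apply Finset.sum_eq_zero
      intro x _
      by_cases hx : m''.1 x = m.1 x
      · rw [hx]; ring
      · have := hA x (m''.1 x) (fpf m'' x) hx
        linarith
    have hd : (∑ x : Fin (2 * n), A s(x, m''.1 x))
        + (∑ x : Fin (2 * n), A s(m.1 x, m.1 (m''.1 x)))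
        - (∑ x : Fin (2 * n), A s(x, m.1 x))
        - (∑ x : Fin (2 * n), A s(m''.1 x, m.1 (m''.1 x))) = 0 := by
      have h := hsum
      rw [Finset.sum_sub_distrib, Finset.sum_sub_distrib, Finset.sum_add_distrib] at h
      exact h
    have me : Equiv.Perm (Fin (2 * n)) := ⟨m.1, m.1, invol m, invol m⟩
    have e2 : ∑ x : Fin (2 * n), A s(m''.1 x, m.1 (m''.1 x)) =
        ∑ x : Fin (2 * n), A s(x, m.1 x) :=
      Equiv.sum_comp (⟨m''.1, m''.1, invol m'', invol m''⟩ : Equiv.Perm (Fin (2 * n)))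
        (fun y => A s(y, m.1 y))
    have e1 : ∑ x : Fin (2 * n), A s(m.1 x, m.1 (m''.1 x)) =
        ∑ x : Fin (2 * n), A s(x, conj.1 x) := by
      calc ∑ x : Fin (2 * n), A s(m.1 x, m.1 (m''.1 x))
          = ∑ x : Fin (2 * n), A s(m.1 x, m.1 (m''.1 (m.1 (m.1 x)))) := by
            apply Finset.sum_congr rfl; intro x _; rw [invol]
        _ = ∑ x : Fin (2 * n), A s(x, m.1 (m''.1 (m.1 x))) :=
            Equiv.sum_comp (⟨m.1, m.1, invol m, invol m⟩ : Equiv.Perm (Fin (2 * n)))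
              (fun y => A s(y, m.1 (m''.1 (m.1 y))))
        _ = ∑ x : Fin (2 * n), A s(x, conj.1 x) := rfl
    rw [e1, e2] at hd
    have hfm := hrep m
    have hfm' := hrep m''
    have hfc := hrep conj
    have key : f m'' + f conj = 2 * f m := by linarith
    rcases hBool m'' with h1 | h1 <;> rcases hBool conj with h2 | h2 <;>
      rcases hBool m with h3 | h3 <;> linarith
  · push_neg at hA
    obtain ⟨u, v, hvu, hvmu, hD⟩ := hA
    have huv : u ≠ v := hvu.symm
    have humu : u ≠ m.1 u := (fpf m u).symm
    have humv : u ≠ m.1 v := fun h => hvmu (by rw [h, invol])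
    have hvmv : v ≠ m.1 v := (fpf m v).symm
    have hmumv : m.1 u ≠ m.1 v := fun h => huv (minj m h)
    refine ⟨{s(u, m.1 u), s(v, m.1 v)}, ?_, ⟨?_, ?_⟩, ?_, ?_⟩
    · exact le_trans (Finset.card_insert_le _ _) (by simp)
    · -- non-diagonal
      intro e he
      simp only [Finset.mem_insert, Finset.mem_singleton] at he
      rcases he with rfl | rfl
      · rw [Sym2.mk_isDiag_iff]; exact humu
      · rw [Sym2.mk_isDiag_iff]; exact hvmv
    · -- pairwise disjoint
      intro e he g hg hne a hae hag
      simp only [Finset.mem_insert, Finset.mem_singleton] at he hg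
      rcases he with rfl | rfl <;> rcases hg with rfl | rfl
      · exact hne rfl
      · rw [Sym2.mem_iff] at hae hag
        rcases hae with rfl | rfl <;> rcases hag with h | h
        · exact huv h
        · exact humv h
        · exact hvmu h.symm
        · exact hmumv h
      · rw [Sym2.mem_iff] at hae hag
        rcases hae with rfl | rfl <;> rcases hag with h | h
        · exact huv h.symm
        · exact hvmu h
        · exact humv h.symm
        · exact hmumv h.symm
      · exact hne rfl
    · -- m satisfies C
      intro e he
      simp only [Finset.mem_insert, Finset.mem_singleton] at he
      rcases he with rfl | rfl
      · exact Finset.mem_image.mpr ⟨u, Finset.mem_univ u, rfl⟩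
      · exact Finset.mem_image.mpr ⟨v, Finset.mem_univ v, rfl⟩
    · -- determination
      intro m'' hsat
      have h1 : m''.1 u = m.1 u := by
        have hmem := hsat (s(u, m.1 u)) (Finset.mem_insert_self _ _)
        obtain ⟨i, -, hi⟩ := Finset.mem_image.mp hmem
        rcases Sym2.eq_iff.mp hi with ⟨rfl, hb⟩ | ⟨rfl, hb⟩
        · exact hb
        · have h3 := congrArg m''.1 hb
          rw [invol] at h3
          exact h3.symm
      have h2 : m''.1 v = m.1 v := by
        have hmem := hsat (s(v, m.1 v))
          (Finset.mem_insert_of_mem (Finset.mem_singleton_self _))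
        obtain ⟨i, -, hi⟩ := Finset.mem_image.mp hmem
        rcases Sym2.eq_iff.mp hi with ⟨rfl, hb⟩ | ⟨rfl, hb⟩
        · exact hb
        · have h3 := congrArg m''.1 hb
          rw [invol] at h3
          exact h3.symm
      have hvmu'' : v ≠ m''.1 u := by rw [h1]; exact hvmu
      have hs1 := sum_swap_diff A m u v hvu hvmu
      have hs2 := sum_swap_diff A m'' u v hvu hvmu''
      rw [h1, h2] at hs2
      have hfσ : f (pmSwap m u v) = f m +
          2 * (A s(u, v) + A s(m.1 u, m.1 v) - A s(u, m.1 u) - A s(v, m.1 v)) := by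
        rw [hrep (pmSwap m u v), hrep m, hs1]; ring
      have hfτ : f (pmSwap m'' u v) = f m'' +
          2 * (A s(u, v) + A s(m.1 u, m.1 v) - A s(u, m.1 u) - A s(v, m.1 v)) := by
        rw [hrep (pmSwap m'' u v), hrep m'', hs2]; ring
      rcases hBool m with h3 | h3 <;> rcases hBool m'' with h4 | h4 <;>
        rcases hBool (pmSwap m u v) with h5 | h5 <;>
        rcases hBool (pmSwap m'' u v) with h6 | h6 <;>
        first
          | linarith
          | (exfalso; exact hD (by linarith))
end

section
/- Let f : M_{2n} → {0,1} be the characteristic function of a 2-intersecting family, and suppose C(f) ≤ n − 2. If f(m1) = f(m2) = 1 and C_{m1}, C_{m2} are minimum certificates for m1 and m2 respectively (with respect to f), then |C_{m1} ∩ C_{m2}| ≥ 2 (as sets of unordered pairs). -/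
namespace PMAux

variable {N : ℕ}

def vsupp (C : Finset (Sym2 (Fin N))) : Finset (Fin N) :=
  Finset.univ.filter fun v => ∃ e ∈ C, v ∈ e

lemma mem_vsupp {C : Finset (Sym2 (Fin N))} {v : Fin N} :
    v ∈ vsupp C ↔ ∃ e ∈ C, v ∈ e := by simp [vsupp]

lemma validSubset {C D : Finset (Sym2 (Fin N))} (h : C ⊆ D) (hD : ValidEdgeSet D) :
    ValidEdgeSet C :=
  ⟨fun e he => hD.1 e (h he), fun e he f hf => hD.2 e (h he) f (h hf)⟩

lemma card_vsupp {C : Finset (Sym2 (Fin N))} (hC : ValidEdgeSet C) :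
    (vsupp C).card = 2 * C.card := by
  classical
  have hrw : vsupp C = C.biUnion fun e => Finset.univ.filter (· ∈ e) := by
    ext v; simp [mem_vsupp]
  rw [hrw, Finset.card_biUnion]
  · rw [Finset.sum_congr rfl (g := fun _ => 2) (fun e he => ?_)]
    · simp [mul_comm]
    · induction e using Sym2.ind with
    | _ a b =>
      have hab : a ≠ b := by
        have := hC.1 _ he; rwa [Sym2.mk_isDiag_iff] at this
      have : Finset.univ.filter (· ∈ s(a,b)) = {a, b} := by
        ext v; simp [Sym2.mem_iff]
      rw [this, Finset.card_insert_of_notMem (by simp [hab]), Finset.card_singleton]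
  · intro e he f hf hef
    simp only [Finset.disjoint_left, Finset.mem_filter]
    rintro v ⟨-, hv⟩ ⟨-, hv'⟩
    exact hC.2 e he f hf hef v hv hv'

lemma exists_extension {n : ℕ} (C : Finset (Sym2 (Fin (2*n)))) (hC : ValidEdgeSet C) :
    ∃ D, C ⊆ D ∧ ValidEdgeSet D ∧ vsupp D = Finset.univ := by
  classical
  generalize hk : ((vsupp C)ᶜ).card = k
  induction k using Nat.strong_induction_on generalizing C with
  | _ k ih =>
    rcases Nat.eq_zero_or_pos k with h0 | hpos
    · refine ⟨C, le_refl _, hC, ?_⟩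
      have : (vsupp C)ᶜ = ∅ := Finset.card_eq_zero.mp (h0 ▸ hk)
      rwa [Finset.compl_eq_empty_iff] at this
    · have hsum : (vsupp C).card + ((vsupp C)ᶜ).card = 2 * n := by
        rw [Finset.card_add_card_compl]; simp
      have hvc := card_vsupp hC
      have hk2 : 2 ≤ k := by omega
      obtain ⟨a, ha, b, hb, hab⟩ := Finset.one_lt_card.mp (by omega : 1 < ((vsupp C)ᶜ).card)
      have ha' : a ∉ vsupp C := Finset.mem_compl.mp ha
      have hb' : b ∉ vsupp C := Finset.mem_compl.mp hb
      set C' : Finset (Sym2 (Fin (2*n))) := insert s(a,b) C with hC'def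
      have hnew : s(a,b) ∉ C := fun h => ha' (mem_vsupp.mpr ⟨_, h, by simp⟩)
      have hmemnew : ∀ v, v ∈ s(a,b) → v ∉ vsupp C := by
        intro v hv
        rcases Sym2.mem_iff.mp hv with rfl | rfl <;> assumption
      have hC' : ValidEdgeSet C' := by
        constructor
        · intro e he
          rcases Finset.mem_insert.mp he with rfl | he
          · rw [Sym2.mk_isDiag_iff]; exact hab
          · exact hC.1 e he
        · intro e he f hf hef v hv hvf
          rcases Finset.mem_insert.mp he with rfl | he <;>
            rcases Finset.mem_insert.mp hf with rfl | hf
          · exact hef rfl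
          · exact hmemnew v hv (mem_vsupp.mpr ⟨f, hf, hvf⟩)
          · exact hmemnew v hvf (mem_vsupp.mpr ⟨e, he, hv⟩)
          · exact hC.2 e he f hf hef v hv hvf
      have hcard' : ((vsupp C')ᶜ).card = k - 2 := by
        have h1 : (vsupp C').card = 2 * C'.card := card_vsupp hC'
        have h2 : C'.card = C.card + 1 := Finset.card_insert_of_notMem hnew
        have h3 : (vsupp C').card + ((vsupp C')ᶜ).card = 2 * n := by
          rw [Finset.card_add_card_compl]; simp
        omega
      obtain ⟨D, hsub, hD, hDu⟩ := ih (k - 2) (by omega) C' hC' hcard'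
      exact ⟨D, (Finset.subset_insert _ _).trans hsub, hD, hDu⟩

lemma exists_rotation {D : Finset (Sym2 (Fin N))} (hD : ValidEdgeSet D) (h2 : 2 ≤ D.card) :
    ∃ R, ValidEdgeSet R ∧ vsupp R = vsupp D ∧ ∀ e ∈ R, e ∉ D := by
  classical
  set k := D.card with hk
  haveI : NeZero k := ⟨by omega⟩
  have hone : (1 : Fin k) ≠ 0 := by
    intro h
    have := congrArg Fin.val h
    rw [Fin.val_one', Nat.mod_eq_of_lt (by omega : 1 < k)] at this
    simp at this
  have hsucc_ne : ∀ i : Fin k, i + 1 ≠ i := by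
    intro i h
    exact hone (add_left_cancel (a := i) (by rw [h, add_zero]))
  set e : Fin k → Sym2 (Fin N) := fun i => (D.equivFin.symm i : Sym2 (Fin N)) with he_def
  have he : ∀ i, e i ∈ D := fun i => (D.equivFin.symm i).2
  have einj : Function.Injective e :=
    fun i j h => D.equivFin.symm.injective (Subtype.ext h)
  have esurj : ∀ f ∈ D, ∃ i, e i = f := by
    intro f hf
    exact ⟨D.equivFin ⟨f, hf⟩, by simp only [he_def, Equiv.symm_apply_apply]⟩
  have hrep : ∀ z : Sym2 (Fin N), ∃ x y, z = s(x, y) :=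
    fun z => Sym2.ind (fun x y => ⟨x, y, rfl⟩) z
  have hab : ∀ i : Fin k, ∃ a b : Fin N, a ≠ b ∧ e i = s(a, b) := by
    intro i
    obtain ⟨x, y, hz⟩ := hrep (e i)
    refine ⟨x, y, ?_, hz⟩
    intro h
    exact hD.1 _ (he i) (by rw [hz, Sym2.mk_isDiag_iff]; exact h)
  choose a b hne heq using hab
  have hma : ∀ i, a i ∈ e i := fun i => by rw [heq]; simp
  have hmb : ∀ i, b i ∈ e i := fun i => by rw [heq]; simp
  have hx : ∀ {x : Fin N} {i j : Fin k}, x ∈ e i → x ∈ e j → i = j := by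
    intro x i j h1 h2
    by_contra hne'
    exact hD.2 _ (he i) _ (he j) (fun h => hne' (einj h)) x h1 h2
  set R : Finset (Sym2 (Fin N)) :=
    Finset.univ.image (fun i : Fin k => s(b i, a (i + 1))) with hR_def
  have hmemR : ∀ {er : Sym2 (Fin N)}, er ∈ R ↔ ∃ i, s(b i, a (i + 1)) = er := by
    intro er; simp [hR_def]
  have hndR : ∀ i : Fin k, b i ≠ a (i + 1) := by
    intro i h
    exact hsucc_ne i (hx (h ▸ hmb i) (hma (i + 1))).symm
  have hsh : ∀ {x : Fin N} {i j : Fin k},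
      x ∈ s(b i, a (i + 1)) → x ∈ s(b j, a (j + 1)) → i = j := by
    intro x i j h1 h2
    rcases Sym2.mem_iff.mp h1 with rfl | rfl <;> rcases Sym2.mem_iff.mp h2 with h | h
    · exact hx (hmb i) (h ▸ hmb j)
    · -- b i = a (j+1)
      have hij : i = j + 1 := hx (hmb i) (h ▸ hma (j + 1))
      rw [hij] at h
      exact absurd h.symm (hne (j + 1))
    · -- a (i+1) = b j
      have hij : i + 1 = j := hx (hma (i + 1)) (h ▸ hmb j)
      rw [hij] at h
      exact absurd h (hne j)
    · have := hx (hma (i + 1)) (h ▸ hma (j + 1))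
      exact add_right_cancel this
  refine ⟨R, ⟨?_, ?_⟩, ?_, ?_⟩
  · intro er her
    obtain ⟨i, rfl⟩ := hmemR.mp her
    rw [Sym2.mk_isDiag_iff]
    exact hndR i
  · intro er her fr hfr hef v hv hvf
    obtain ⟨i, rfl⟩ := hmemR.mp her
    obtain ⟨j, rfl⟩ := hmemR.mp hfr
    exact hef (by rw [hsh hv hvf])
  · ext x
    simp only [mem_vsupp]
    constructor
    · rintro ⟨er, her, hxe⟩
      obtain ⟨i, rfl⟩ := hmemR.mp her
      rcases Sym2.mem_iff.mp hxe with rfl | rfl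
      · exact ⟨e i, he i, hmb i⟩
      · exact ⟨e (i + 1), he (i + 1), hma (i + 1)⟩
    · rintro ⟨f, hf, hxf⟩
      obtain ⟨i, rfl⟩ := esurj f hf
      rw [heq i] at hxf
      rcases Sym2.mem_iff.mp hxf with rfl | rfl
      · refine ⟨s(b (i - 1), a ((i - 1) + 1)), hmemR.mpr ⟨i - 1, rfl⟩, ?_⟩
        rw [sub_add_cancel]; simp
      · exact ⟨s(b i, a (i + 1)), hmemR.mpr ⟨i, rfl⟩, by simp⟩
  · intro er her hermem
    obtain ⟨i, rfl⟩ := hmemR.mp her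
    obtain ⟨j, hj⟩ := esurj _ hermem
    have h1 : b i ∈ e j := by rw [hj]; simp
    have h2 : a (i + 1) ∈ e j := by rw [hj]; simp
    have hij : i = j := hx (hmb i) h1
    have hij2 : i + 1 = j := hx (hma (i + 1)) h2
    exact hsucc_ne i (by rw [hij2, hij])

lemma edges_eq_of_mem {m : PM N} {x : Fin N} {e : Sym2 (Fin N)}
    (he : e ∈ PM.edges m) (hx : x ∈ e) : e = s(x, m.1 x) := by
  obtain ⟨i, -, rfl⟩ := Finset.mem_image.mp he
  rcases Sym2.mem_iff.mp hx with rfl | rfl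
  · rfl
  · rw [m.2.2 i]; exact Sym2.eq_swap

lemma valid_edges (m : PM N) : ValidEdgeSet (PM.edges m) := by
  constructor
  · intro e he
    obtain ⟨i, -, rfl⟩ := Finset.mem_image.mp he
    rw [Sym2.mk_isDiag_iff]
    exact fun h => m.2.1 i h.symm
  · intro e he f hf hef x hx hxf
    exact hef ((edges_eq_of_mem he hx).trans (edges_eq_of_mem hf hxf).symm)

lemma card_edges_le {n : ℕ} (m : PM (2 * n)) : (PM.edges m).card ≤ n := by
  have h1 := card_vsupp (valid_edges m)
  have h2 : (vsupp (PM.edges m)).card ≤ 2 * n := by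
    simpa using Finset.card_le_univ (vsupp (PM.edges m))
  omega

lemma exists_pm_of_full (D : Finset (Sym2 (Fin N))) (hD : ValidEdgeSet D)
    (hcov : vsupp D = Finset.univ) : ∃ m : PM N, PM.edges m = D := by
  classical
  have hcov' : ∀ i : Fin N, ∃ e ∈ D, i ∈ e := by
    intro i
    exact mem_vsupp.mp (hcov ▸ Finset.mem_univ i)
  have huniq : ∀ (i : Fin N) (e : Sym2 (Fin N)), e ∈ D → i ∈ e →
      ∀ f ∈ D, i ∈ f → f = e := by
    intro i e heD hie f hfD hif
    by_contra hne
    exact hD.2 f hfD e heD hne i hif hie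
  choose E hED hEm using hcov'
  have hEuniq : ∀ (i : Fin N) (e : Sym2 (Fin N)), e ∈ D → i ∈ e → e = E i :=
    fun i e heD hie => huniq i (E i) (hED i) (hEm i) e heD hie
  set g : Fin N → Fin N := fun i => Sym2.Mem.other' (hEm i) with hg_def
  have hspec : ∀ i, s(i, g i) = E i := fun i => Sym2.other_spec' (hEm i)
  have hgmem : ∀ i, g i ∈ E i := fun i => Sym2.other_mem' (hEm i)
  have hgne : ∀ i, g i ≠ i := by
    intro i h
    apply hD.1 (E i) (hED i)
    rw [← hspec i, h, Sym2.mk_isDiag_iff]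
  have hEg : ∀ i, E (g i) = E i := by
    intro i
    exact (hEuniq (g i) (E i) (hED i) (hgmem i)).symm
  have hinv : ∀ i, g (g i) = i := by
    intro i
    have h1 : s(g i, g (g i)) = E (g i) := hspec (g i)
    rw [hEg i, ← hspec i] at h1
    -- s(g i, g (g i)) = s(i, g i)
    rcases Sym2.eq_iff.mp h1 with ⟨h2, h3⟩ | ⟨h2, h3⟩
    · exact absurd h2 (hgne i)
    · exact h3
  refine ⟨⟨g, fun i => hgne i, hinv⟩, ?_⟩
  apply Finset.Subset.antisymm
  · intro er her
    obtain ⟨i, -, rfl⟩ := Finset.mem_image.mp her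
    rw [show s(i, g i) = E i from hspec i]
    exact hED i
  · intro er herD
    obtain ⟨x, y, hz⟩ := (fun z => Sym2.ind (fun x y => ⟨x, y, rfl⟩) z :
      ∀ z : Sym2 (Fin N), ∃ x y, z = s(x, y)) er
    have hxe : x ∈ er := by rw [hz]; simp
    have : er = E x := hEuniq x er herD hxe
    rw [this, ← hspec x]
    exact Finset.mem_image.mpr ⟨x, Finset.mem_univ x, rfl⟩


lemma vsupp_union {C R : Finset (Sym2 (Fin N))} :
    vsupp (C ∪ R) = vsupp C ∪ vsupp R := by
  ext x
  simp only [mem_vsupp, Finset.mem_union]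
  constructor
  · rintro ⟨e, he | he, hx⟩
    · exact Or.inl ⟨e, he, hx⟩
    · exact Or.inr ⟨e, he, hx⟩
  · rintro (⟨e, he, hx⟩ | ⟨e, he, hx⟩)
    · exact ⟨e, Or.inl he, hx⟩
    · exact ⟨e, Or.inr he, hx⟩

lemma build {n : ℕ} (C G : Finset (Sym2 (Fin (2*n)))) (hC : ValidEdgeSet C)
    (hG : ValidEdgeSet G) (hcard : C.card + 2 ≤ n) :
    ∃ E, ValidEdgeSet E ∧ vsupp E = Finset.univ ∧ C ⊆ E ∧
      ∀ e ∈ E, e ∈ G → e ∈ C := by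
  classical
  set A : Finset (Sym2 (Fin (2*n))) :=
    G.filter (fun e => ∀ v, v ∈ e → v ∉ vsupp C) with hA_def
  have hAmem : ∀ {e}, e ∈ A ↔ e ∈ G ∧ ∀ v, v ∈ e → v ∉ vsupp C := by
    intro e; simp [hA_def]
  have hCA : ValidEdgeSet (C ∪ A) := by
    constructor
    · intro e he
      rcases Finset.mem_union.mp he with he | he
      · exact hC.1 e he
      · exact hG.1 e (hAmem.mp he).1
    · intro e he f hf hef v hv hvf
      rcases Finset.mem_union.mp he with he | he <;>
        rcases Finset.mem_union.mp hf with hf | hf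
      · exact hC.2 e he f hf hef v hv hvf
      · exact (hAmem.mp hf).2 v hvf (mem_vsupp.mpr ⟨e, he, hv⟩)
      · exact (hAmem.mp he).2 v hv (mem_vsupp.mpr ⟨f, hf, hvf⟩)
      · exact hG.2 e (hAmem.mp he).1 f (hAmem.mp hf).1 hef v hv hvf
  obtain ⟨P, hsubP, hPvalid, hPuniv⟩ := exists_extension (C ∪ A) hCA
  have hCsubP : C ⊆ P := (Finset.subset_union_left).trans hsubP
  set D : Finset (Sym2 (Fin (2*n))) := P \ C with hD_def
  have hDvalid : ValidEdgeSet D := validSubset (Finset.sdiff_subset) hPvalid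
  have hvsuppD : vsupp D = (vsupp C)ᶜ := by
    ext x
    simp only [Finset.mem_compl, mem_vsupp]
    constructor
    · rintro ⟨e, heD, hx⟩
      obtain ⟨heP, heC⟩ := Finset.mem_sdiff.mp heD
      rintro ⟨g, hgC, hxg⟩
      rcases eq_or_ne g e with rfl | hne
      · exact heC hgC
      · exact hPvalid.2 g (hCsubP hgC) e heP hne x hxg hx
    · intro hxC
      have : x ∈ vsupp P := hPuniv ▸ Finset.mem_univ x
      obtain ⟨e, heP, hx⟩ := mem_vsupp.mp this
      refine ⟨e, Finset.mem_sdiff.mpr ⟨heP, fun heC => hxC ⟨e, heC, hx⟩⟩, hx⟩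
  have hcardD : 2 ≤ D.card := by
    have h1 := card_vsupp hDvalid
    have h2 := card_vsupp hC
    have h3 : (vsupp C).card + ((vsupp C)ᶜ).card = 2 * n := by
      rw [Finset.card_add_card_compl]; simp
    rw [hvsuppD] at h1
    omega
  obtain ⟨R, hRvalid, hRsupp, hRD⟩ := exists_rotation hDvalid hcardD
  have hRC : ∀ v : Fin (2*n), v ∈ vsupp R → v ∉ vsupp C := by
    intro v hv
    rw [hRsupp, hvsuppD] at hv
    exact Finset.mem_compl.mp hv
  refine ⟨C ∪ R, ?_, ?_, Finset.subset_union_left, ?_⟩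
  · constructor
    · intro e he
      rcases Finset.mem_union.mp he with he | he
      · exact hC.1 e he
      · exact hRvalid.1 e he
    · intro e he f hf hef v hv hvf
      rcases Finset.mem_union.mp he with he | he <;>
        rcases Finset.mem_union.mp hf with hf | hf
      · exact hC.2 e he f hf hef v hv hvf
      · exact hRC v (mem_vsupp.mpr ⟨f, hf, hvf⟩) (mem_vsupp.mpr ⟨e, he, hv⟩)
      · exact hRC v (mem_vsupp.mpr ⟨e, he, hv⟩) (mem_vsupp.mpr ⟨f, hf, hvf⟩)
      · exact hRvalid.2 e he f hf hef v hv hvf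
  · rw [vsupp_union, hRsupp, hvsuppD, Finset.union_compl]
  · intro e he heG
    rcases Finset.mem_union.mp he with he | he
    · exact he
    · have heA : e ∈ A := hAmem.mpr ⟨heG, fun v hv => hRC v (mem_vsupp.mpr ⟨e, he, hv⟩)⟩
      have heP : e ∈ P := hsubP (Finset.mem_union_right _ heA)
      by_cases heC : e ∈ C
      · exact heC
      · exact absurd (Finset.mem_sdiff.mpr ⟨heP, heC⟩) (hRD e he)

end PMAux

/-- If `f` is the characteristic function of a 2-intersecting family of
perfect matchings and `C(f) ≤ n - 2`, then minimum certificates of any two members of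
the family intersect in at least two pairs. -/
theorem pm_min_certificates_two_intersect
    (n : ℕ) (F : Finset (PM (2 * n)))
    (hF : PMTwoIntersectingFamily F)
    (f : PM (2 * n) → ℝ)
    (hf : ∀ m, f m = if m ∈ F then 1 else 0)
    (hC : pmCertComplexity f ≤ n - 2)
    (m1 m2 : PM (2 * n)) (hm1 : f m1 = 1) (hm2 : f m2 = 1)
    (C1 C2 : Finset (Sym2 (Fin (2 * n))))
    (hC1 : IsPMCertFor f m1 C1) (hC1min : C1.card = pmCertComplexityAt f m1)
    (hC2 : IsPMCertFor f m2 C2) (hC2min : C2.card = pmCertComplexityAt f m2) :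
    2 ≤ (C1 ∩ C2).card := by
  
  classical
  by_contra hlt
  push_neg at hlt
  have hm1F : m1 ∈ F := by
    rw [hf] at hm1; by_contra h; simp [h] at hm1
  have hn2 : 2 ≤ n := by
    have h1 : 2 ≤ (PM.edges m1 ∩ PM.edges m1).card := hF m1 hm1F m1 hm1F
    rw [Finset.inter_self] at h1
    exact h1.trans (PMAux.card_edges_le m1)
  have hCle : pmCertComplexityAt f m1 ≤ n - 2 :=
    le_trans (Finset.le_sup (Finset.mem_univ m1)) hC
  have hc1 : C1.card + 2 ≤ n := by rw [hC1min]; omega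
  have hCle2 : pmCertComplexityAt f m2 ≤ n - 2 :=
    le_trans (Finset.le_sup (Finset.mem_univ m2)) hC
  have hc2 : C2.card + 2 ≤ n := by rw [hC2min]; omega
  obtain ⟨E1, hE1v, hE1u, hC1E1, hkey1⟩ := PMAux.build C1 C2 hC1.1 hC2.1 hc1
  obtain ⟨m1', hm1'E⟩ := PMAux.exists_pm_of_full E1 hE1v hE1u
  obtain ⟨E2, hE2v, hE2u, hC2E2, hkey2⟩ := PMAux.build C2 E1 hC2.1 hE1v hc2
  obtain ⟨m2', hm2'E⟩ := PMAux.exists_pm_of_full E2 hE2v hE2u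
  have hsat1 : PMSatisfies m1' C1 := fun e he => hm1'E ▸ hC1E1 he
  have hsat2 : PMSatisfies m2' C2 := fun e he => hm2'E ▸ hC2E2 he
  have hf1 : f m1' = 1 := (hC1.2.2 m1' hsat1).trans hm1
  have hf2 : f m2' = 1 := (hC2.2.2 m2' hsat2).trans hm2
  have hm1'F : m1' ∈ F := by rw [hf] at hf1; by_contra h; simp [h] at hf1
  have hm2'F : m2' ∈ F := by rw [hf] at hf2; by_contra h; simp [h] at hf2
  have h2i : 2 ≤ (PM.edges m1' ∩ PM.edges m2').card := hF m1' hm1'F m2' hm2'F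
  have hsub : PM.edges m1' ∩ PM.edges m2' ⊆ C1 ∩ C2 := by
    intro e he
    rw [Finset.mem_inter, hm1'E, hm2'E] at he
    have heC2 : e ∈ C2 := hkey2 e he.2 he.1
    exact Finset.mem_inter.mpr ⟨hkey1 e he.1 heC2, heC2⟩
  have hfin := Finset.card_le_card hsub
  omega
end

section
/- If n ≥ 8 and f : M_{2n} → {0,1} has degree at most 2, then C(f) ≤ n − 2. -/
/-! Suppose `C(f, m) > n - 2`, so no set of at most `n - 2` edges of `m` is a certificate for `m`.
Split the `n ≥ 8` edges of `m` into four classes of at least two edges each; the edges outside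
one class form such a set, so some matching agreeing with `m` on them takes the other value.
These four flips have disjoint supports and can be performed independently, which embeds the cube
`{0,1}⁴` into `M_{2n}`. On the cube every edge indicator depends on one coordinate, so `f` pulls
back to a combination of functions of at most two coordinates, all killed by `cubeFunctional`;
but no Boolean function whose value at the origin differs from its values at all four neighbours
of the origin is killed by it. -/

theorem Finset.exists_subset_pair_of_card_le_two {α : Type*} [DecidableEq α] [Nonempty α]
    {s : Finset α} (hs : s.card ≤ 2) : ∃ a b, s ⊆ {a, b} := by
  rcases Nat.lt_or_eq_of_le hs with hs | hs
  · obtain ⟨a, ha⟩ : ∃ a, s ⊆ {a} := Finset.card_le_one_iff_subset_singleton.1 (by omega)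
    exact ⟨a, a, ha.trans (by simp)⟩
  · obtain ⟨a, b, -, rfl⟩ := Finset.card_eq_two.1 hs
    exact ⟨a, b, subset_rfl⟩

theorem Finset.exists_two_le_card_filter_eq {α : Type*} {s : Finset α} {d : ℕ} [NeZero d]
    (hs : 2 * d ≤ s.card) : ∃ φ : α → Fin d, ∀ k, 2 ≤ (s.filter (φ · = k)).card := by
  classical
  obtain ⟨T, hTs, hT⟩ := Finset.exists_subset_card_eq hs
  let ε : T ≃ Fin d × Fin 2 := Fintype.equivOfCardEq (by simp [hT, mul_comm])
  let φ : α → Fin d := fun a => if h : a ∈ T then (ε ⟨a, h⟩).1 else 0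
  have hmem : ∀ k j, (ε.symm (k, j) : α) ∈ s.filter (φ · = k) := fun k j => by
    simp [φ, hTs (ε.symm (k, j)).2]
  refine ⟨φ, fun k => Finset.one_lt_card.2 ⟨_, hmem k 0, _, hmem k 1, fun h => ?_⟩⟩
  simpa using ε.symm.injective (Subtype.ext h)

/-- The functional `h ↦ ∑_y w(|y|) h(y)` on `{0,1}⁴` with level weights `w = (-3, 2, -1, 0, 1)`.
Since `w t + 2 w (t + 1) + w (t + 2) = 0` for `t = 0, 1, 2`, summing out any two coordinates gives
zero, so it annihilates every function of at most two coordinates. -/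
def cubeFunctional : ((Fin 4 → Bool) → ℝ) →ₗ[ℝ] ℝ where
  toFun h := h (fun _ => true)
    - (h (fun i => decide (i = 0 ∨ i = 1)) + h (fun i => decide (i = 0 ∨ i = 2))
      + h (fun i => decide (i = 0 ∨ i = 3)) + h (fun i => decide (i = 1 ∨ i = 2))
      + h (fun i => decide (i = 1 ∨ i = 3)) + h (fun i => decide (i = 2 ∨ i = 3)))
    + 2 * ∑ k, h (fun i => decide (i = k)) - 3 * h (fun _ => false)
  map_add' _ _ := by simp only [Pi.add_apply, Finset.sum_add_distrib]; ring
  map_smul' _ _ := by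
    simp only [Pi.smul_apply, smul_eq_mul, RingHom.id_apply, ← Finset.mul_sum]
    ring

theorem cubeFunctional_eq_zero_of_dependsOn {h : (Fin 4 → Bool) → ℝ} {K : Finset (Fin 4)}
    (hK : K.card ≤ 2) (hh : DependsOn h K) : cubeFunctional h = 0 := by
  obtain ⟨k, l, hKkl⟩ := Finset.exists_subset_pair_of_card_le_two hK
  replace hh : DependsOn h {k, l} :=
    hh.mono (by rw [← Finset.coe_pair]; exact Finset.coe_subset.2 hKkl)
  set G : Bool → Bool → ℝ := fun a b => h fun i => if i = k then a else b
  have hG : h = fun y => G (y k) (y l) := by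
    funext y
    refine hh fun i hi => ?_
    rcases hi with rfl | rfl
    · simp
    · split_ifs with hik
      · rw [hik]
      · rfl
  rw [hG]
  fin_cases k <;> fin_cases l <;> simp [cubeFunctional, Fin.sum_univ_four] <;> ring

theorem cubeFunctional_ne_zero {h : (Fin 4 → Bool) → ℝ} (hBool : ∀ y, h y = 0 ∨ h y = 1)
    (hflip : ∀ k, h (fun i => decide (i = k)) ≠ h (fun _ => false)) : cubeFunctional h ≠ 0 := by
  have hbounds : ∀ y, 0 ≤ h y ∧ h y ≤ 1 := fun y => by rcases hBool y with hy | hy <;> simp [hy]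
  have hsingle : ∀ k, h (fun i => decide (i = k)) = 1 - h (fun _ => false) := fun k => by
    have := hflip k
    rcases hBool (fun i => decide (i = k)) with h1 | h1 <;>
      rcases hBool (fun _ => false) with h0 | h0 <;> simp_all
  simp only [cubeFunctional, LinearMap.coe_mk, AddHom.coe_mk, Fin.sum_univ_four, hsingle]
  rcases hBool (fun _ => false) with h0 | h0 <;> rw [h0] <;>
    linarith [hbounds (fun _ => true), hbounds (fun i => decide (i = 0 ∨ i = 1)),
      hbounds (fun i => decide (i = 0 ∨ i = 2)), hbounds (fun i => decide (i = 0 ∨ i = 3)),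
      hbounds (fun i => decide (i = 1 ∨ i = 2)), hbounds (fun i => decide (i = 1 ∨ i = 3)),
      hbounds (fun i => decide (i = 2 ∨ i = 3))]

namespace PM

variable {N : ℕ}

theorem mk_mem_edges_iff {m : PM N} {u v : Fin N} : s(u, v) ∈ m.edges ↔ m.1 u = v := by
  simp only [PM.edges, Finset.mem_image, Finset.mem_univ, true_and, Sym2.eq_iff]
  constructor
  · rintro ⟨i, ⟨rfl, rfl⟩ | ⟨rfl, rfl⟩⟩
    exacts [rfl, m.2.2 i]
  · rintro rfl
    exact ⟨u, Or.inl ⟨rfl, rfl⟩⟩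

theorem mk_apply_mem_edges (m : PM N) (u : Fin N) : s(u, m.1 u) ∈ m.edges :=
  mk_mem_edges_iff.2 rfl

theorem not_isDiag_of_mem_edges {m : PM N} {e : Sym2 (Fin N)} (he : e ∈ m.edges) :
    ¬ e.IsDiag := by
  induction e using Sym2.ind with
  | _ u v =>
    rw [Sym2.mk_isDiag_iff]
    rintro rfl
    exact m.2.1 u (mk_mem_edges_iff.1 he)

theorem eq_mk_of_mem_edges {m : PM N} {e : Sym2 (Fin N)} (he : e ∈ m.edges) {a : Fin N}
    (ha : a ∈ e) : e = s(a, m.1 a) := by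
  induction e using Sym2.ind with
  | _ u v =>
    rw [mk_mem_edges_iff] at he
    rcases Sym2.mem_iff.1 ha with rfl | rfl
    · rw [he]
    · rw [← he, m.2.2, Sym2.eq_swap]

theorem validEdgeSet_of_subset_edges {m : PM N} {C : Finset (Sym2 (Fin N))}
    (hC : C ⊆ m.edges) : ValidEdgeSet C :=
  ⟨fun _ he => not_isDiag_of_mem_edges (hC he), fun _ he _ he' hne _ ha ha' =>
    hne ((eq_mk_of_mem_edges (hC he) ha).trans (eq_mk_of_mem_edges (hC he') ha').symm)⟩

theorem two_mul_card_edges (m : PM N) : 2 * m.edges.card = N := by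
  have hfiber : ∀ e ∈ m.edges,
      (Finset.univ.filter fun i => s(i, m.1 i) = e).card = 2 := by
    intro e he
    refine (congrArg Finset.card ?_).trans
      (Sym2.card_toFinset_of_not_isDiag e (not_isDiag_of_mem_edges he))
    ext i
    simp only [Finset.mem_filter, Finset.mem_univ, true_and, Sym2.mem_toFinset]
    exact ⟨fun h => h ▸ Sym2.mem_mk_left _ _, fun h => (eq_mk_of_mem_edges he h).symm⟩
  have := Finset.card_eq_sum_card_image (fun i => s(i, m.1 i)) Finset.univ
  rw [Finset.card_univ, Fintype.card_fin, ← PM.edges, Finset.sum_congr rfl hfiber,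
    Finset.sum_const, smul_eq_mul] at this
  omega

/-- Flips of `m` with pairwise disjoint supports: `flip k` agrees with `m` outside the
`m`-invariant class `part ⁻¹' {k}`. -/
structure IndependentFlips (m : PM N) (ι : Type*) where
  flip : ι → PM N
  part : Fin N → ι
  part_apply : ∀ x, part (m.1 x) = part x
  flip_apply_of_part_ne : ∀ k x, part x ≠ k → (flip k).1 x = m.1 x

namespace IndependentFlips

variable {m : PM N} {ι : Type*} (F : m.IndependentFlips ι)

theorem part_flip_apply (x : Fin N) : F.part ((F.flip (F.part x)).1 x) = F.part x := by
  by_contra h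
  have hx : m.1 ((F.flip (F.part x)).1 x) = x :=
    ((F.flip_apply_of_part_ne _ _ h).symm).trans ((F.flip _).2.2 x)
  exact h (by rw [← F.part_apply, hx])

def cube (y : ι → Bool) : PM N :=
  ⟨fun x => if y (F.part x) then (F.flip (F.part x)).1 x else m.1 x, by
    refine ⟨fun x => ?_, fun x => ?_⟩
    · dsimp only
      split
      exacts [(F.flip _).2.1 x, m.2.1 x]
    · by_cases hy : y (F.part x)
      · simp only [hy, if_true, F.part_flip_apply, (F.flip _).2.2]
      · simp only [hy, F.part_apply, if_false, m.2.2, Bool.false_eq_true]⟩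

theorem cube_apply (y : ι → Bool) (x : Fin N) :
    (F.cube y).1 x = if y (F.part x) then (F.flip (F.part x)).1 x else m.1 x :=
  rfl

theorem cube_false : F.cube (fun _ => false) = m :=
  Subtype.ext (funext fun x => by simp [cube_apply])

theorem cube_single [DecidableEq ι] (k : ι) : F.cube (fun i => decide (i = k)) = F.flip k := by
  refine Subtype.ext (funext fun x => ?_)
  by_cases hx : F.part x = k
  · simp [cube_apply, hx]
  · simp [cube_apply, hx, F.flip_apply_of_part_ne k x hx]

theorem exists_dependsOn_mem_edges_cube (e : Sym2 (Fin N)) :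
    ∃ k, DependsOn (fun y => e ∈ (F.cube y).edges) {k} := by
  induction e using Sym2.ind with
  | _ u v =>
    refine ⟨F.part u, fun y y' hyy' => ?_⟩
    simp only [mk_mem_edges_iff, cube_apply, hyy' _ rfl]

theorem exists_dependsOn_pmMonomial_cube (S : Finset (Sym2 (Fin N))) :
    ∃ K : Finset ι, K.card ≤ S.card ∧ DependsOn (fun y => pmMonomial S (F.cube y)) K := by
  classical
  choose coord hcoord using F.exists_dependsOn_mem_edges_cube
  refine ⟨S.image coord, Finset.card_image_le, fun y y' hyy' =>
    Finset.prod_congr rfl fun e he => ?_⟩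
  refine if_congr (hcoord e fun i hi => hyy' i ?_).to_iff rfl rfl
  rw [Set.mem_singleton_iff.1 hi]
  exact Finset.mem_coe.2 (Finset.mem_image_of_mem coord he)

end IndependentFlips

end PM

theorem exists_ne_of_card_lt_pmCertComplexityAt {N : ℕ} {f : PM N → ℝ} {m : PM N}
    {C : Finset (Sym2 (Fin N))} (hC : C ⊆ m.edges) (hlt : C.card < pmCertComplexityAt f m) :
    ∃ m', PMSatisfies m' C ∧ f m' ≠ f m := by
  by_contra! h
  exact hlt.not_ge (Nat.sInf_le ⟨C, rfl, PM.validEdgeSet_of_subset_edges hC, hC, h⟩)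

theorem PM.IndependentFlips.cubeFunctional_comp_cube_eq_zero {N : ℕ} {m : PM N}
    (F : m.IndependentFlips (Fin 4)) {f : PM N → ℝ} (hf : PMDegLE N 2 f) :
    cubeFunctional (f ∘ F.cube) = 0 := by
  let L := cubeFunctional ∘ₗ LinearMap.funLeft ℝ ℝ F.cube
  refine (Submodule.span_le (p := LinearMap.ker L)).2 ?_ hf
  rintro _ ⟨S, hS, rfl⟩
  obtain ⟨K, hKS, hK⟩ := F.exists_dependsOn_pmMonomial_cube S
  exact cubeFunctional_eq_zero_of_dependsOn (hKS.trans hS) hK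

theorem PM.IndependentFlips.exists_flip_eq_of_pmDegLE_two {N : ℕ} {m : PM N}
    (F : m.IndependentFlips (Fin 4)) {f : PM N → ℝ} (hBool : ∀ m, f m = 0 ∨ f m = 1)
    (hf : PMDegLE N 2 f) : ∃ k, f (F.flip k) = f m := by
  by_contra! hflip
  refine cubeFunctional_ne_zero (h := f ∘ F.cube) (fun y => hBool _) (fun k => ?_)
    (F.cubeFunctional_comp_cube_eq_zero hf)
  simpa [F.cube_single, F.cube_false] using hflip k

/-- If `n ≥ 8` and `f : M_{2n} → {0,1}` has degree at most 2, then
`C(f) ≤ n - 2`. -/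
theorem pm_degree_two_cert_complexity_bound
    (n : ℕ) (hn : 8 ≤ n) (f : PM (2 * n) → ℝ)
    (hBool : ∀ m, f m = 0 ∨ f m = 1)
    (hdeg : PMDegLE (2 * n) 2 f) :
    pmCertComplexity f ≤ n - 2 := by
  refine Finset.sup_le fun m _ => ?_
  by_contra! hm
  have hcard := m.two_mul_card_edges
  obtain ⟨φ, hφ⟩ := Finset.exists_two_le_card_filter_eq (s := m.edges) (d := 4) (by omega)
  have hflip : ∀ k, ∃ m', PMSatisfies m' (m.edges.filter (¬ φ · = k)) ∧ f m' ≠ f m := fun k =>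
    exists_ne_of_card_lt_pmCertComplexityAt (Finset.filter_subset _ _) (by
      have := Finset.card_filter_add_card_filter_not (s := m.edges) (φ · = k)
      have := hφ k
      omega)
  choose flip hflip using hflip
  let F : m.IndependentFlips (Fin 4) :=
    { flip
      part x := φ s(x, m.1 x)
      part_apply x := by rw [m.2.2, Sym2.eq_swap]
      flip_apply_of_part_ne k x hx := PM.mk_mem_edges_iff.1
        ((hflip k).1 _ (Finset.mem_filter.2 ⟨m.mk_apply_mem_edges x, hx⟩)) }
  obtain ⟨k, hk⟩ := F.exists_flip_eq_of_pmDegLE_two hBool hdeg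
  exact (hflip k).2 hk
end
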